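/- arXiv:2107.06062 — 5 statements merged into one kernel-verified Lean document; each statement's English description precedes it below -/
import Mathlib

section
/- Let X be an infinite transitive subshift over a finite alphabet A. Then for every n ≥ 1, |Aut_{⌊(n−1)/2⌋}(X,σ)| ≤ (c_{1+c_n(X)}(X))^{2|A|(c_{n+1}(X) − c_n(X))}. -/
/-!
An automorphism commutes with the shift and is continuous, so it is determined by its value at a
point `x` with dense orbit; if it has range `N`, then `(φ x) m` is a function of the window
`x[m - N, m + N]`, a prefix of the `n`-window of `x` at `m - N`.

Every `n`-window of `x` is determined by the `(n+1)`-window at some right-special position and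
by an offset of at most `c_n` from it. Indeed, the `(n+1)`-window at a position that is not right-special is
determined by the `n`-window there, so along a stretch without right-special positions, agreement
of two windows propagates to the right; a stretch longer than `c_n` repeats a window and can
therefore be shortened. Right-special positions occur arbitrarily far to the left, since
otherwise `x` would be periodic and `X` finite.

Hence `φ x` is determined by its words of length `1 + c_n` next to one occurrence of each
`(n+1)`-word with right-special `n`-prefix. There are at most `|A| (c_{n+1} - c_n)` of these, as
each right-special `n`-word has at least two right extensions.
-/

open Filter Topology

/-- The left shift on bi-infinite sequences, as a bijection. -/
def shiftPerm (A : Type) : Equiv.Perm (ℤ → A) where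
  toFun x n := x (n + 1)
  invFun x n := x (n - 1)
  left_inv x := funext fun n => by simp
  right_inv x := funext fun n => by simp

/-- A subshift: a closed, shift-invariant subset of the full shift. -/
def IsSubshift {A : Type} [TopologicalSpace A] (X : Set (ℤ → A)) : Prop :=
  IsClosed X ∧ (shiftPerm A) '' X = X

/-- The word `w` occurs in some point of `X`. -/
def WordIn {A : Type} (X : Set (ℤ → A)) (w : List A) : Prop :=
  ∃ x ∈ X, ∃ i : ℤ, ∀ j : Fin w.length, x (i + ((j : ℕ) : ℤ)) = w.get j

/-- The language of `X`. -/
def language {A : Type} (X : Set (ℤ → A)) : Set (List A) :=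
  {w | WordIn X w}

/-- The word complexity function `c_n(X)`: the number of `n`-letter words of `X`. -/
noncomputable def complexity {A : Type} (X : Set (ℤ → A)) (n : ℕ) : ℕ :=
  Nat.card {w : List A // w.length = n ∧ w ∈ language X}

/-- Topological transitivity: some point has dense (two-sided) shift orbit. -/
def IsTransitive {A : Type} [TopologicalSpace A] (X : Set (ℤ → A)) : Prop :=
  ∃ x ∈ X, closure {y : ℤ → A | ∃ k : ℤ, (shiftPerm A ^ k) x = y} = X

/-- The shift restricted to a subshift, as a bijection of the subshift. -/
def shiftRestrict {A : Type} [TopologicalSpace A] {X : Set (ℤ → A)} (hX : IsSubshift X) :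
    Equiv.Perm ↥X where
  toFun x := ⟨shiftPerm A x, by
    have h : shiftPerm A (x : ℤ → A) ∈ (shiftPerm A) '' X := ⟨x, x.2, rfl⟩
    rwa [hX.2] at h⟩
  invFun x := ⟨(shiftPerm A).symm x, by
    have h : (x : ℤ → A) ∈ (shiftPerm A) '' X := by rw [hX.2]; exact x.2
    obtain ⟨y, hy, hyx⟩ := h
    have h2 : (shiftPerm A).symm (x : ℤ → A) = y := by rw [← hyx]; simp
    rwa [h2]⟩
  left_inv x := Subtype.ext (by simp)
  right_inv x := Subtype.ext (by simp)

/-- The automorphism group of a subshift: shift-commuting self-homeomorphisms of `X`. -/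
def Aut {A : Type} [TopologicalSpace A] {X : Set (ℤ → A)} (hX : IsSubshift X) :
    Subgroup (Equiv.Perm ↥X) where
  carrier := {φ : Equiv.Perm ↥X | Continuous ⇑φ ∧ Continuous ⇑(φ⁻¹) ∧
    ∀ x, φ (shiftRestrict hX x) = shiftRestrict hX (φ x)}
  one_mem' := ⟨continuous_id, continuous_id, fun _ => rfl⟩
  mul_mem' := by
    rintro a b ⟨ha1, ha2, ha3⟩ ⟨hb1, hb2, hb3⟩
    refine ⟨?_, ?_, fun x => ?_⟩
    · exact ha1.comp hb1
    · exact hb2.comp ha2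
    · simp only [Equiv.Perm.mul_apply, hb3, ha3]
  inv_mem' := by
    rintro a ⟨ha1, ha2, ha3⟩
    refine ⟨ha2, by simpa using ha1, fun x => ?_⟩
    apply a.injective
    rw [ha3]; simp

/-- `φ` is induced by the block map `Φ` with range `N`. -/
def InducedBy {A : Type} {X : Set (ℤ → A)} (φ : Equiv.Perm ↥X) (N : ℕ)
    (Φ : (Fin (2 * N + 1) → A) → A) : Prop :=
  ∀ (x : ↥X) (m : ℤ), (φ x : ℤ → A) m = Φ (fun j => (x : ℤ → A) (m - (N : ℤ) + ((j : ℕ) : ℤ)))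

/-- `φ` has range `N`: it is induced by some block map on words of length `2N+1`. -/
def HasRange {A : Type} {X : Set (ℤ → A)} (φ : Equiv.Perm ↥X) (N : ℕ) : Prop :=
  ∃ Φ : (Fin (2 * N + 1) → A) → A, InducedBy φ N Φ

open Function

section Windows

variable {A : Type}

def window (x : ℤ → A) (i : ℤ) (m : ℕ) : List A :=
  List.ofFn fun t : Fin m => x (i + t)

@[simp]
lemma length_window (x : ℤ → A) (i : ℤ) (m : ℕ) : (window x i m).length = m :=
  List.length_ofFn

lemma window_eq_window_iff {x y : ℤ → A} {i j : ℤ} {m : ℕ} :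
    window x i m = window y j m ↔ ∀ t < m, x (i + t) = y (j + t) := by
  simp [window, List.ofFn_inj, funext_iff, Fin.forall_iff]

lemma window_succ (x : ℤ → A) (i : ℤ) (m : ℕ) :
    window x i (m + 1) = window x i m ++ [x (i + m)] := by
  rw [window, List.ofFn_succ', List.concat_eq_append]
  rfl

lemma window_succ' (x : ℤ → A) (i : ℤ) (m : ℕ) :
    window x i (m + 1) = x i :: window x (i + 1) m := by
  simp [window, List.ofFn_succ, add_assoc, add_comm (1 : ℤ)]

lemma window_eq_window_of_le {x y : ℤ → A} {i j : ℤ} {l m : ℕ} (hlm : l ≤ m)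
    (h : window x i m = window y j m) : window x i l = window y j l :=
  window_eq_window_iff.2 fun t ht => window_eq_window_iff.1 h t (ht.trans_le hlm)

lemma window_mem_language {X : Set (ℤ → A)} {x : ℤ → A} (hx : x ∈ X) (i : ℤ) (m : ℕ) :
    window x i m ∈ language X :=
  ⟨x, hx, i, fun t => by rw [List.get_eq_getElem]; simp [window]⟩

lemma mem_language_iff {X : Set (ℤ → A)} {w : List A} :
    w ∈ language X ↔ ∃ x ∈ X, ∃ i, window x i w.length = w := by
  refine ⟨fun ⟨x, hx, i, h⟩ => ⟨x, hx, i, List.ext_get (by simp) fun t _ ht => ?_⟩, ?_⟩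
  · simpa [window] using h ⟨t, ht⟩
  · rintro ⟨x, hx, i, h⟩
    exact h ▸ window_mem_language hx i _

end Windows

section Words

variable {A : Type} {X : Set (ℤ → A)} {x : ℤ → A} {n : ℕ}

def wordsOfLength (X : Set (ℤ → A)) (n : ℕ) : Set (List A) :=
  {w | w.length = n ∧ w ∈ language X}

def IsRightSpecial (X : Set (ℤ → A)) (w : List A) : Prop :=
  ∃ a b, a ≠ b ∧ w ++ [a] ∈ language X ∧ w ++ [b] ∈ language X

def rightSpecialWords (X : Set (ℤ → A)) (n : ℕ) : Set (List A) :=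
  {w ∈ wordsOfLength X n | IsRightSpecial X w}

lemma complexity_eq_card (X : Set (ℤ → A)) (n : ℕ) :
    complexity X n = Nat.card (wordsOfLength X n) :=
  rfl

instance [Finite A] : Finite (wordsOfLength X n) :=
  ((List.finite_length_eq A n).subset fun _ hw => hw.1).to_subtype

instance [Finite A] : Finite (rightSpecialWords X n) :=
  Finite.Set.subset _ fun _ hw => hw.1

lemma window_mem_wordsOfLength (hx : x ∈ X) (i : ℤ) : window x i n ∈ wordsOfLength X n :=
  ⟨length_window x i n, window_mem_language hx i n⟩

lemma complexity_pos [Finite A] (hx : x ∈ X) : 0 < complexity X n := by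
  have : Nonempty (wordsOfLength X n) := ⟨⟨_, window_mem_wordsOfLength hx 0⟩⟩
  rw [complexity_eq_card]
  exact Nat.card_pos

lemma exists_append_mem_language {w : List A} (hw : w ∈ language X) :
    ∃ a, w ++ [a] ∈ language X := by
  obtain ⟨x, hx, i, hxw⟩ := mem_language_iff.1 hw
  refine ⟨x (i + w.length), ?_⟩
  simpa [window_succ, hxw] using window_mem_language hx i (w.length + 1)

lemma eq_of_not_isRightSpecial {w : List A} (hw : ¬ IsRightSpecial X w) {a b : A}
    (ha : w ++ [a] ∈ language X) (hb : w ++ [b] ∈ language X) : a = b := by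
  by_contra hab
  exact hw ⟨a, b, hab, ha, hb⟩

lemma card_rightSpecialWords_le [Finite A] (X : Set (ℤ → A)) (n : ℕ) :
    Nat.card (rightSpecialWords X n) ≤ complexity X (n + 1) - complexity X n := by
  choose e he using fun w : wordsOfLength X n => exists_append_mem_language w.2.2
  have (w : rightSpecialWords X n) :
      ∃ b, w.1 ++ [b] ∈ language X ∧ b ≠ e ⟨w, w.2.1⟩ := by
    obtain ⟨w, hw, a, b, hab, ha, hb⟩ := w
    by_cases hae : a = e ⟨w, hw⟩
    exacts [⟨b, hb, hae ▸ hab.symm⟩, ⟨a, ha, hae⟩]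
  choose e' he' using this
  let f : wordsOfLength X n ⊕ rightSpecialWords X n → wordsOfLength X (n + 1) :=
    Sum.elim (fun w => ⟨w.1 ++ [e w], by simp [w.2.1], he w⟩)
      (fun w => ⟨w.1 ++ [e' w], by simp [w.2.1.1], (he' w).1⟩)
  have hf : Injective f := by
    refine Injective.sumElim ?_ ?_ ?_ <;> intro v w h <;> have h' := congrArg Subtype.val h
    · exact Subtype.ext (List.append_inj' h' rfl).1
    · exact Subtype.ext (List.append_inj' h' rfl).1
    · obtain ⟨hvw, hlast⟩ := List.append_inj' h' rfl
      obtain rfl : v = ⟨w, w.2.1⟩ := Subtype.ext hvw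
      exact (he' w).2 (List.singleton_inj.1 hlast).symm
  have := Nat.card_le_card_of_injective f hf
  rw [Nat.card_sum] at this
  rw [complexity_eq_card, complexity_eq_card]
  omega

end Words

section Propagation

variable {A : Type} {X : Set (ℤ → A)} {x y : ℤ → A} {n : ℕ}

lemma window_succ_eq_of_not_isRightSpecial (hx : x ∈ X) (hy : y ∈ X) {i j : ℤ}
    (h : window x i n = window y j n) (hns : ¬ IsRightSpecial X (window x i n)) :
    window x i (n + 1) = window y j (n + 1) := by
  have hxy : x (i + n) = y (j + n) := by
    refine eq_of_not_isRightSpecial hns ?_ ?_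
    · rw [← window_succ]; exact window_mem_language hx i _
    · rw [h, ← window_succ]; exact window_mem_language hy j _
  rw [window_succ, window_succ, h, hxy]

lemma window_add_eq_of_not_isRightSpecial (hx : x ∈ X) (hy : y ∈ X) {i j : ℤ}
    (h : window x i (n + 1) = window y j (n + 1)) {t : ℕ}
    (hns : ∀ k, i < k → k ≤ i + t → ¬ IsRightSpecial X (window x k n)) :
    window x (i + t) (n + 1) = window y (j + t) (n + 1) := by
  induction t with
  | zero => simpa using h
  | succ t ih =>
    have ih := ih fun k hik hkt => hns k hik (by omega)
    rw [window_succ', window_succ', List.cons.injEq] at ih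
    push_cast
    rw [← add_assoc, ← add_assoc]
    exact window_succ_eq_of_not_isRightSpecial hx hy ih.2 (hns _ (by omega) (by omega))

lemma exists_lt_window_eq [Finite A] (hx : x ∈ X) (i : ℤ) :
    ∃ s₁ s₂ : ℕ, s₁ < s₂ ∧ s₂ ≤ complexity X n ∧
      window x (i + s₁) n = window x (i + s₂) n := by
  let f : Fin (complexity X n + 1) → wordsOfLength X n :=
    fun s => ⟨_, window_mem_wordsOfLength hx (i + s)⟩
  have hf : ¬ Injective f := fun hf => by
    simpa [complexity_eq_card] using Nat.card_le_card_of_injective f hf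
  obtain ⟨s₁, s₂, hfs, hne⟩ := not_injective_iff.1 hf
  have hs₁ := s₁.is_lt
  have hs₂ := s₂.is_lt
  rcases lt_or_gt_of_ne hne with hlt | hlt
  · exact ⟨s₁, s₂, hlt, by omega, congrArg Subtype.val hfs⟩
  · exact ⟨s₂, s₁, hlt, by omega, (congrArg Subtype.val hfs).symm⟩

lemma exists_window_eq_of_not_isRightSpecial [Finite A] (hx : x ∈ X) {j : ℤ}
    (hns : ∀ k, j - complexity X n ≤ k → k < j → ¬ IsRightSpecial X (window x k n)) :
    ∃ j', j - complexity X n ≤ j' ∧ j' < j ∧ window x j' n = window x j n := by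
  obtain ⟨s₁, s₂, hs, hs₂, hw⟩ := exists_lt_window_eq (n := n) hx (j - complexity X n)
  have h := window_succ_eq_of_not_isRightSpecial hx hx hw (hns _ (by omega) (by omega))
  have := window_add_eq_of_not_isRightSpecial hx hx h (t := complexity X n - s₂)
    fun k h₁ h₂ => hns k (by omega) (by omega)
  refine ⟨j - complexity X n + s₁ + (complexity X n - s₂ : ℕ), by omega, by omega, ?_⟩
  convert window_eq_window_of_le n.le_succ this using 2
  omega

lemma exists_window_eq_le_add_complexity [Finite A] (hx : x ∈ X) {k j : ℤ} (hkj : k ≤ j)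
    (hns : ∀ i, k < i → i ≤ j → ¬ IsRightSpecial X (window x i n)) :
    ∃ j', k ≤ j' ∧ j' ≤ k + complexity X n ∧ j' ≤ j ∧
      window x j' n = window x j n := by
  obtain ⟨d, hd⟩ : ∃ d : ℕ, j - k ≤ d := ⟨(j - k).toNat, Int.self_le_toNat _⟩
  induction d generalizing j with
  | zero => exact ⟨j, hkj, by omega, le_rfl, rfl⟩
  | succ d ih =>
    by_cases hjk : j ≤ k + complexity X n
    · exact ⟨j, hkj, hjk, le_rfl, rfl⟩
    obtain ⟨j', hj'₁, hj'₂, hj'⟩ :=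
      exists_window_eq_of_not_isRightSpecial hx fun i h₁ h₂ => hns i (by omega) h₂.le
    obtain ⟨j'', h₁, h₂, h₃, h₄⟩ :=
      ih (j := j') (by omega) (fun i h₁ h₂ => hns i h₁ (by omega)) (by omega)
    exact ⟨j'', h₁, h₂, by omega, h₄.trans hj'⟩

lemma exists_mem_Ico_window_eq (hx : x ∈ X) {i j : ℤ} (hij : i < j)
    (hw : window x i n = window x j n)
    (hns : ∀ k, i ≤ k → k < j → ¬ IsRightSpecial X (window x k n)) (t : ℕ) :
    ∃ k, i ≤ k ∧ k < j ∧ window x k n = window x (j + t) n := by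
  induction t with
  | zero => exact ⟨i, le_rfl, hij, by simpa using hw⟩
  | succ t ih =>
    obtain ⟨k, hik, hkj, hk⟩ := ih
    have h := window_succ_eq_of_not_isRightSpecial hx hx hk (hns k hik hkj)
    rw [window_succ', window_succ', List.cons.injEq, add_assoc] at h
    push_cast
    rcases (show k + 1 < j ∨ k + 1 = j by omega) with hlt | rfl
    · exact ⟨k + 1, by omega, hlt, h.2⟩
    · exact ⟨i, le_rfl, hij, hw.trans h.2⟩

lemma periodic_of_forall_not_isRightSpecial [Finite A] (hx : x ∈ X)
    (hns : ∀ k, ¬ IsRightSpecial X (window x k n)) :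
    Periodic x ((complexity X n).factorial : ℤ) := by
  intro i
  obtain ⟨j, hj₁, hj₂, hw⟩ :=
    exists_window_eq_of_not_isRightSpecial (j := i) hx fun k _ _ => hns k
  have hagree (t : ℕ) : x (j + t) = x (i + t) := by
    have h := window_add_eq_of_not_isRightSpecial hx hx
      (window_succ_eq_of_not_isRightSpecial hx hx hw (hns j)) (t := t) fun k _ _ => hns k
    rw [window_succ', window_succ'] at h
    exact (List.cons.inj h).1
  set p := (i - j).toNat
  have hper : Periodic (fun t : ℕ => x (j + t)) p := fun t => by
    simp only
    rw [hagree t]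
    congr 1
    push_cast
    omega
  obtain ⟨r, hr⟩ := Nat.dvd_factorial (m := p) (n := complexity X n) (by omega) (by omega)
  have := hper.nat_mul r p
  simp only [Nat.cast_id] at this
  rw [hr, mul_comm]
  convert this using 2 <;> push_cast <;> omega

end Propagation

section Shift

variable {A : Type}

def shiftOrbit (x : ℤ → A) : Set (ℤ → A) :=
  {y | ∃ k : ℤ, (shiftPerm A ^ k) x = y}

lemma shiftPerm_zpow_apply (k : ℤ) (x : ℤ → A) (m : ℤ) :
    (shiftPerm A ^ k) x m = x (m + k) := by
  induction k using Int.induction_on generalizing x with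
  | zero => simp
  | succ k ih =>
    rw [zpow_add_one, Equiv.Perm.mul_apply, ih]
    simp [shiftPerm, add_assoc]
  | pred k ih =>
    rw [zpow_sub_one, Equiv.Perm.mul_apply, ih]
    simp [shiftPerm, sub_eq_add_neg, add_assoc]

lemma coe_shiftRestrict_zpow_apply [TopologicalSpace A] {X : Set (ℤ → A)} (hX : IsSubshift X)
    (k : ℤ) (y : X) : ((shiftRestrict hX ^ k) y : ℤ → A) = (shiftPerm A ^ k) y := by
  induction k using Int.induction_on generalizing y with
  | zero => rfl
  | succ k ih =>
    rw [zpow_add_one, zpow_add_one, Equiv.Perm.mul_apply, Equiv.Perm.mul_apply, ih]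
    rfl
  | pred k ih =>
    rw [zpow_sub_one, zpow_sub_one, Equiv.Perm.mul_apply, Equiv.Perm.mul_apply, ih]
    rfl

end Shift

section Orbit

variable {A : Type} [TopologicalSpace A] [DiscreteTopology A] {X : Set (ℤ → A)} {x : ℤ → A}

lemma exists_window_eq_of_mem_language (hdense : closure (shiftOrbit x) = X) {w : List A}
    (hw : w ∈ language X) : ∃ k, window x k w.length = w := by
  obtain ⟨z, hz, i, hzw⟩ := mem_language_iff.1 hw
  let U : Set (ℤ → A) :=
    (fun y (t : Fin w.length) => y (i + t)) ⁻¹' {fun t : Fin w.length => z (i + t)}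
  have hU : IsOpen U := (isOpen_discrete _).preimage (continuous_pi fun t => continuous_apply _)
  obtain ⟨_, hyU, k, rfl⟩ := mem_closure_iff.1 (hdense ▸ hz) U hU rfl
  refine ⟨i + k, (window_eq_window_iff.2 fun t ht => ?_).trans hzw⟩
  have := congrFun hyU ⟨t, ht⟩
  simp only [shiftPerm_zpow_apply] at this
  rw [← this, add_right_comm]

lemma finite_of_periodic (hdense : closure (shiftOrbit x) = X) {Q : ℕ} (hQ : 0 < Q)
    (hper : Periodic x (Q : ℤ)) : X.Finite := by
  have hfin := Set.finite_range fun r : Fin Q => (shiftPerm A ^ (r : ℤ)) x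
  have : shiftOrbit x ⊆ Set.range fun r : Fin Q => (shiftPerm A ^ (r : ℤ)) x := by
    rintro _ ⟨k, rfl⟩
    have hlt := Int.emod_lt_of_pos k (b := Q) (by omega)
    have hnonneg := Int.emod_nonneg k (b := Q) (by omega)
    refine ⟨⟨(k % Q).toNat, by omega⟩, funext fun m => ?_⟩
    simp only [shiftPerm_zpow_apply, Int.toNat_of_nonneg hnonneg]
    conv_rhs => rw [← Int.emod_add_mul_ediv k Q, mul_comm, ← add_assoc]
    exact (hper.int_mul _ _).symm
  rw [← hdense]
  exact hfin.subset (hfin.isClosed.closure_subset_iff.2 this)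

lemma exists_le_isRightSpecial [Finite A] (hinf : X.Infinite) (hx : x ∈ X)
    (hdense : closure (shiftOrbit x) = X) (n : ℕ) (j : ℤ) :
    ∃ k ≤ j, IsRightSpecial X (window x k n) := by
  by_contra! hns
  obtain ⟨i, -, hij, hw⟩ := exists_window_eq_of_not_isRightSpecial hx fun k _ hk => hns k hk.le
  have hall (k : ℤ) : ¬ IsRightSpecial X (window x k n) := by
    rcases le_or_gt k j with hkj | hjk
    · exact hns k hkj
    obtain ⟨k', -, hk'j, hk'⟩ :=
      exists_mem_Ico_window_eq hx hij hw (fun k' _ h => hns k' h.le) (k - j).toNat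
    rw [show j + (k - j).toNat = k by omega] at hk'
    exact hk' ▸ hns k' hk'j.le
  exact hinf (finite_of_periodic hdense (Nat.factorial_pos _)
    (periodic_of_forall_not_isRightSpecial hx hall))

lemma exists_isRightSpecial_window_eq [Finite A] (hinf : X.Infinite) (hx : x ∈ X)
    (hdense : closure (shiftOrbit x) = X) (n : ℕ) (j : ℤ) :
    ∃ k, IsRightSpecial X (window x k n) ∧ ∃ δ ≤ complexity X n,
      ∀ k', window x k' (n + 1) = window x k (n + 1) → window x (k' + δ) n = window x j n := by
  obtain ⟨k, ⟨hkj, hk⟩, hmax⟩ :=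
    Int.exists_greatest_of_bdd (P := fun k => k ≤ j ∧ IsRightSpecial X (window x k n))
      ⟨j, fun _ h => h.1⟩ (exists_le_isRightSpecial hinf hx hdense n j)
  have hns (i : ℤ) (hki : k < i) (hij : i ≤ j) : ¬ IsRightSpecial X (window x i n) :=
    fun hi => (hmax i ⟨hij, hi⟩).not_gt hki
  obtain ⟨j', hkj', hj'c, hj'j, hw⟩ := exists_window_eq_le_add_complexity hx hkj hns
  refine ⟨k, hk, (j' - k).toNat, by omega, fun k' hk' => ?_⟩
  have := window_add_eq_of_not_isRightSpecial hx hx hk'.symm (t := (j' - k).toNat)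
    fun i h₁ h₂ => hns i h₁ (by omega)
  rw [show k + (j' - k).toNat = j' by omega] at this
  exact (window_eq_window_of_le n.le_succ this).symm.trans hw

end Orbit

section Automorphisms

variable {A : Type} {X : Set (ℤ → A)}

lemma HasRange.apply_add_eq {φ : Equiv.Perm X} {N : ℕ} (hφ : HasRange φ N) (x : X) {i j : ℤ}
    (h : window (x : ℤ → A) i (2 * N + 1) = window x j (2 * N + 1)) :
    (φ x : ℤ → A) (i + N) = (φ x : ℤ → A) (j + N) := by
  obtain ⟨Φ, hΦ⟩ := hφ
  rw [hΦ, hΦ, add_sub_cancel_right, add_sub_cancel_right]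
  exact congrArg Φ (funext fun t => window_eq_window_iff.1 h t t.2)

lemma coe_apply_eq_of_window_eq [TopologicalSpace A] [DiscreteTopology A] [Finite A]
    (hinf : X.Infinite) {x : X}
    (hdense : closure (shiftOrbit (x : ℤ → A)) = X) {N n : ℕ} (hN : 2 * N + 1 ≤ n)
    {φ ψ : Equiv.Perm X} (hφ : HasRange φ N) (hψ : HasRange ψ N)
    (h : ∀ k, IsRightSpecial X (window (x : ℤ → A) k n) →
      ∃ k', window (x : ℤ → A) k' (n + 1) = window x k (n + 1) ∧
        window (φ x : ℤ → A) (k' + N) (1 + complexity X n) =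
          window (ψ x : ℤ → A) (k' + N) (1 + complexity X n)) :
    (φ x : ℤ → A) = ψ x := by
  funext m
  obtain ⟨k, hk, δ, hδ, hcover⟩ := exists_isRightSpecial_window_eq hinf x.2 hdense n (m - N)
  obtain ⟨k', hk', hφψ⟩ := h k hk
  have hw := window_eq_window_of_le hN (hcover k' hk')
  calc (φ x : ℤ → A) m = (φ x : ℤ → A) (k' + δ + N) := by
        simpa using (hφ.apply_add_eq x hw).symm
    _ = (ψ x : ℤ → A) (k' + δ + N) := by
      simpa [add_right_comm] using window_eq_window_iff.1 hφψ δ (by omega)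
    _ = (ψ x : ℤ → A) m := by simpa using hψ.apply_add_eq x hw

lemma aut_eq_of_apply_eq [TopologicalSpace A] [DiscreteTopology A] {hX : IsSubshift X} {x : X}
    (hdense : closure (shiftOrbit (x : ℤ → A)) = X) {φ ψ : Aut hX}
    (h : (φ : Equiv.Perm X) x = (ψ : Equiv.Perm X) x) : φ = ψ := by
  have horbit : Dense (Set.range fun k : ℤ => (shiftRestrict hX ^ k) x) := by
    have : Subtype.val '' Set.range (fun k : ℤ => (shiftRestrict hX ^ k) x) =
        shiftOrbit (x : ℤ → A) := by
      rw [← Set.range_comp]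
      exact congrArg Set.range (funext (coe_shiftRestrict_zpow_apply hX · x))
    rw [Subtype.dense_iff, this, hdense]
  have hcomm (χ : Aut hX) (k : ℤ) : Commute (χ : Equiv.Perm X) (shiftRestrict hX ^ k) :=
    Commute.zpow_right (Equiv.ext χ.2.2.2) k
  have : ⇑(φ : Equiv.Perm X) = ψ := by
    refine Continuous.ext_on horbit φ.2.1 ψ.2.1 ?_
    rintro _ ⟨k, rfl⟩
    rw [← Equiv.Perm.mul_apply, (hcomm φ k).eq, Equiv.Perm.mul_apply, h,
      ← Equiv.Perm.mul_apply, ← (hcomm ψ k).eq, Equiv.Perm.mul_apply]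
  exact Subtype.ext (Equiv.coe_fn_injective this)

lemma card_hasRange_le [TopologicalSpace A] [DiscreteTopology A] [Finite A] {hX : IsSubshift X}
    (hinf : X.Infinite) {x : ℤ → A} (hx : x ∈ X) (hdense : closure (shiftOrbit x) = X)
    {N n : ℕ} (hN : 2 * N + 1 ≤ n) :
    Nat.card {φ : Aut hX // HasRange (φ : Equiv.Perm X) N} ≤
      Nat.card (rightSpecialWords X n × A → wordsOfLength X (1 + complexity X n)) := by
  have (u : List A) : ∃ k, u ∈ language X → window x k u.length = u :=
    (em (u ∈ language X)).elim (fun hu => (exists_window_eq_of_mem_language hdense hu).imp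
      fun _ hk _ => hk) fun hu => ⟨0, fun hu' => absurd hu' hu⟩
  choose occ hocc using this
  let F (φ : {φ : Aut hX // HasRange (φ : Equiv.Perm X) N}) (p : rightSpecialWords X n × A) :
      wordsOfLength X (1 + complexity X n) :=
    ⟨_, window_mem_wordsOfLength ((φ.1 : Equiv.Perm X) ⟨x, hx⟩).2 (occ (p.1 ++ [p.2]) + N)⟩
  refine Nat.card_le_card_of_injective F fun ⟨φ, hφ⟩ ⟨ψ, hψ⟩ hFφψ => ?_
  refine Subtype.ext (aut_eq_of_apply_eq (x := ⟨x, hx⟩) hdense (Subtype.ext ?_))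
  refine coe_apply_eq_of_window_eq hinf hdense hN hφ hψ fun k hk => ?_
  have hu := window_succ x k n ▸ window_mem_language hx k (n + 1)
  refine ⟨occ (window x k n ++ [x (k + n)]), by simpa [window_succ] using hocc _ hu, ?_⟩
  exact congrArg Subtype.val
    (congrFun hFφψ (⟨window x k n, window_mem_wordsOfLength hx k, hk⟩, x (k + n)))

end Automorphisms

/-- For an infinite transitive subshift, the number of automorphisms
of range `⌊(n-1)/2⌋` is at most `c_{1+c_n(X)}(X) ^ (2|A|(c_{n+1}(X) - c_n(X)))`. -/
theorem card_aut_range_le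
    {A : Type} [Fintype A] [TopologicalSpace A] [DiscreteTopology A]
    (X : Set (ℤ → A)) (hX : IsSubshift X) (hinf : X.Infinite) (htrans : IsTransitive X)
    (n : ℕ) (hn : 1 ≤ n) :
    Nat.card {φ : ↥(Aut hX) // HasRange (φ : Equiv.Perm ↥X) ((n - 1) / 2)} ≤
      complexity X (1 + complexity X n) ^
        (2 * Fintype.card A * (complexity X (n + 1) - complexity X n)) := by
  obtain ⟨x, hx, hdense⟩ := htrans
  calc Nat.card {φ : Aut hX // HasRange (φ : Equiv.Perm X) ((n - 1) / 2)}
      ≤ Nat.card (rightSpecialWords X n × A → wordsOfLength X (1 + complexity X n)) :=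
        card_hasRange_le hinf hx hdense (by omega)
    _ = complexity X (1 + complexity X n) ^
          (Nat.card (rightSpecialWords X n) * Fintype.card A) := by
        rw [Nat.card_fun, Nat.card_prod, Nat.card_eq_fintype_card (α := A)]
        rfl
    _ ≤ _ := by
        refine Nat.pow_le_pow_right (complexity_pos hx) ?_
        have := card_rightSpecialWords_le X n
        nlinarith
end

section
/- Let f, g : ℕ → ℝ be sequences of positive reals such that liminf_{n→∞} (f(n) − Σ_{i=1}^n g(i)) = −∞. Then there exist infinitely many n such that both f(n) < Σ_{i=1}^n g(i) and f(n) − f(n−1) < g(n). -/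
open Filter Topology

/-- If `liminf (f(n) - Σ_{i=1}^n g(i)) = -∞` for sequences of positive
reals, then there are infinitely many `n` with `f(n) < Σ_{i=1}^n g(i)` and
`f(n) - f(n-1) < g(n)`. -/
theorem infinitely_many_small_diff
    (f g : ℕ → ℝ) (hf : ∀ n, 1 ≤ n → 0 < f n) (hg : ∀ n, 1 ≤ n → 0 < g n)
    (h : Filter.liminf
      (fun n : ℕ => ((f n - ∑ i ∈ Finset.Icc 1 n, g i : ℝ) : EReal)) Filter.atTop = ⊥) :
    {n : ℕ | 2 ≤ n ∧ f n < ∑ i ∈ Finset.Icc 1 n, g i ∧ f n - f (n - 1) < g n}.Infinite := by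
  set hh : ℕ → ℝ := fun n => f n - ∑ i ∈ Finset.Icc 1 n, g i with hhdef
  -- unboundedness below
  have unb : ∀ B : ℝ, ∃ m, hh m < B := by
    intro B
    by_contra hc
    push_neg at hc
    have hle : (B : EReal) ≤ Filter.liminf (fun n : ℕ => ((hh n : ℝ) : EReal)) Filter.atTop := by
      apply Filter.le_liminf_of_le
      · isBoundedDefault
      · exact Filter.Eventually.of_forall fun m => by exact_mod_cast hc m
    rw [hhdef] at hle
    rw [h] at hle
    exact (EReal.coe_ne_bot B) (le_bot_iff.mp hle)
  apply Set.infinite_of_not_bddAbove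
  rw [not_bddAbove_iff]
  intro N₀
  set N : ℕ := max N₀ 1 with hNdef
  have hne : (Finset.Icc 0 N).Nonempty := ⟨0, by simp⟩
  set B : ℝ := min 0 ((Finset.Icc 0 N).inf' hne hh) with hB
  obtain ⟨m, hm⟩ := unb B
  have hex : ∃ m, hh m < B := ⟨m, hm⟩
  set n := Nat.find hex with hn
  have hspec : hh n < B := Nat.find_spec hex
  have hBk : ∀ k ≤ N, B ≤ hh k := fun k hk =>
    le_trans (min_le_right _ _) (Finset.inf'_le hh (by simp [hk]))
  have hNn : N < n := by
    by_contra hcon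
    push_neg at hcon
    exact absurd hspec (not_lt.mpr (hBk n hcon))
  have h2 : 2 ≤ n := by omega
  have hprev : B ≤ hh (n - 1) := by
    by_contra hcon
    push_neg at hcon
    exact Nat.find_min hex (by omega) hcon
  have hlt : hh n < hh (n - 1) := lt_of_lt_of_le hspec hprev
  have hneg : hh n < 0 := lt_of_lt_of_le hspec (min_le_left _ _)
  refine ⟨n, ⟨h2, ?_, ?_⟩, by omega⟩
  · have := hneg
    simp only [hhdef] at this
    linarith
  · have hsum : ∑ i ∈ Finset.Icc 1 n, g i = (∑ i ∈ Finset.Icc 1 (n - 1), g i) + g n := by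
      have hrw : n = (n - 1) + 1 := by omega
      rw [hrw, Finset.sum_Icc_succ_top (by omega)]
      rw [← hrw]
    simp only [hhdef] at hlt
    rw [hsum] at hlt
    linarith
end

section
/- For every subshift X over a finite alphabet A and every n ≥ 1, the number of n-branch words of X is at most 2|A|(c_{n+1}(X) − c_n(X)). -/
open Filter Topology

/-- `w` is a right-special word of length `n` for `X`. -/
def RightSpecial {A : Type} (X : Set (ℤ → A)) (n : ℕ) (w : List A) : Prop :=
  w.length = n ∧ w ∈ language X ∧
    ∃ a b : A, a ≠ b ∧ (w ++ [a]) ∈ language X ∧ (w ++ [b]) ∈ language X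

/-- `w` is a left-special word of length `n` for `X`. -/
def LeftSpecial {A : Type} (X : Set (ℤ → A)) (n : ℕ) (w : List A) : Prop :=
  w.length = n ∧ w ∈ language X ∧
    ∃ c d : A, c ≠ d ∧ (c :: w) ∈ language X ∧ (d :: w) ∈ language X

/-- `w` satisfies the defining constraints of an `n`-right branch word: it is in the
language, begins with a right-special word of length `n`, contains no other
right-special word of length `n`, and has no repeated `n`-letter subword. -/
def RightBranchCand {A : Type} (X : Set (ℤ → A)) (n : ℕ) (w : List A) : Prop :=
  w ∈ language X ∧ n ≤ w.length ∧ RightSpecial X n (w.take n) ∧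
    (∀ i, i + n ≤ w.length → RightSpecial X n ((w.drop i).take n) → i = 0) ∧
    (∀ i j, i + n ≤ w.length → j + n ≤ w.length →
      (w.drop i).take n = (w.drop j).take n → i = j)

/-- `w` satisfies the defining constraints of an `n`-left branch word. -/
def LeftBranchCand {A : Type} (X : Set (ℤ → A)) (n : ℕ) (w : List A) : Prop :=
  w ∈ language X ∧ n ≤ w.length ∧ LeftSpecial X n (w.drop (w.length - n)) ∧
    (∀ i, i + n ≤ w.length → LeftSpecial X n ((w.drop i).take n) → i + n = w.length) ∧
    (∀ i j, i + n ≤ w.length → j + n ≤ w.length →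
      (w.drop i).take n = (w.drop j).take n → i = j)

/-- An `n`-right branch word: maximal under subword inclusion among words
satisfying the right branch constraints. -/
def IsRightBranchWord {A : Type} (X : Set (ℤ → A)) (n : ℕ) (w : List A) : Prop :=
  RightBranchCand X n w ∧ ∀ w', RightBranchCand X n w' → w <:+: w' → w' = w

/-- An `n`-left branch word: maximal under subword inclusion among words
satisfying the left branch constraints. -/
def IsLeftBranchWord {A : Type} (X : Set (ℤ → A)) (n : ℕ) (w : List A) : Prop :=
  LeftBranchCand X n w ∧ ∀ w', LeftBranchCand X n w' → w <:+: w' → w' = w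

/-- An `n`-branch word is an `n`-left or `n`-right branch word. -/
def IsBranchWord {A : Type} (X : Set (ℤ → A)) (n : ℕ) (w : List A) : Prop :=
  IsRightBranchWord X n w ∨ IsLeftBranchWord X n w



namespace BW

open List

variable {A : Type}

/-- abstract right-special -/
def RS (L : Set (List A)) (n : ℕ) (w : List A) : Prop :=
  w.length = n ∧ w ∈ L ∧ ∃ a b : A, a ≠ b ∧ (w ++ [a]) ∈ L ∧ (w ++ [b]) ∈ L

def LS (L : Set (List A)) (n : ℕ) (w : List A) : Prop :=
  w.length = n ∧ w ∈ L ∧ ∃ c d : A, c ≠ d ∧ (c :: w) ∈ L ∧ (d :: w) ∈ L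

def RBC (L : Set (List A)) (n : ℕ) (w : List A) : Prop :=
  w ∈ L ∧ n ≤ w.length ∧ RS L n (w.take n) ∧
    (∀ i, i + n ≤ w.length → RS L n ((w.drop i).take n) → i = 0) ∧
    (∀ i j, i + n ≤ w.length → j + n ≤ w.length →
      (w.drop i).take n = (w.drop j).take n → i = j)

def LBC (L : Set (List A)) (n : ℕ) (w : List A) : Prop :=
  w ∈ L ∧ n ≤ w.length ∧ LS L n (w.drop (w.length - n)) ∧
    (∀ i, i + n ≤ w.length → LS L n ((w.drop i).take n) → i + n = w.length) ∧
    (∀ i j, i + n ≤ w.length → j + n ≤ w.length →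
      (w.drop i).take n = (w.drop j).take n → i = j)

def IRB (L : Set (List A)) (n : ℕ) (w : List A) : Prop :=
  RBC L n w ∧ ∀ w', RBC L n w' → w <:+: w' → w' = w

def ILB (L : Set (List A)) (n : ℕ) (w : List A) : Prop :=
  LBC L n w ∧ ∀ w', LBC L n w' → w <:+: w' → w' = w

noncomputable def cx (L : Set (List A)) (k : ℕ) : ℕ :=
  Nat.card {w : List A // w.length = k ∧ w ∈ L}

/-- basic windows -/
lemma window_infix (w : List A) (i n : ℕ) : (w.drop i).take n <:+: w :=
  ((w.drop i).take_prefix n).isInfix.trans (w.drop_suffix i).isInfix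

lemma window_take (w : List A) {i n k : ℕ} (h : i + n = k) :
    ((w.take k).drop i).take n = (w.drop i).take n := by
  rw [List.drop_take, List.take_take]
  congr 1
  omega

lemma window_succ (w : List A) {i n k : ℕ} (hik : i + n = k) (hk : k < w.length) :
    (w.drop i).take (n + 1) = (w.drop i).take n ++ [w[k]] := by
  subst hik
  have hn : n < (w.drop i).length := by rw [List.length_drop]; omega
  rw [List.take_succ, List.getElem?_eq_getElem hn, List.getElem_drop]
  simp

lemma window_len (w : List A) {i n : ℕ} (h : i + n ≤ w.length) :
    ((w.drop i).take n).length = n := by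
  simp only [List.length_take, List.length_drop]
  omega

/-- finiteness of sets of fixed-length words -/
lemma finite_len [Finite A] (L : Set (List A)) (n : ℕ) :
    Finite {w : List A // w.length = n ∧ w ∈ L} := by
  apply Finite.of_injective
    (fun w : {w : List A // w.length = n ∧ w ∈ L} =>
      (fun i : Fin n => w.1.get ⟨i, by rw [w.2.1]; exact i.2⟩))
  intro w w' h
  apply Subtype.ext
  apply List.ext_get (by rw [w.2.1, w'.2.1])
  intro i h1 h2
  have := congrFun h ⟨i, by rw [← w.2.1]; exact h1⟩
  exact this

lemma finite_rs [Finite A] (L : Set (List A)) (n : ℕ) :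
    Finite {u : List A // RS L n u} := by
  have := finite_len L n
  apply Finite.of_injective
    (fun u : {u : List A // RS L n u} =>
      (⟨u.1, u.2.1, u.2.2.1⟩ : {w : List A // w.length = n ∧ w ∈ L}))
  intro u u' h
  simpa [Subtype.ext_iff] using h

/-- key extension lemma -/
lemma take_eq_of_rbc {L : Set (List A)} (hI : ∀ u w : List A, u <:+: w → w ∈ L → u ∈ L)
    {n : ℕ} {w w' : List A} (hw : RBC L n w) (hw' : RBC L n w')
    (hlen : w.length ≤ w'.length) (h1 : w.take (n + 1) = w'.take (n + 1)) :
    w <+: w' := by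
  have key : ∀ k, n + 1 ≤ k → k ≤ w.length → w.take k = w'.take k := by
    intro k hk
    induction k, hk using Nat.le_induction with
    | base => intro _; exact h1
    | succ k hk ih =>
      intro hkw
      have htk := ih (by omega)
      have hik : (k - n) + n = k := by omega
      have hvv : (w.drop (k - n)).take n = (w'.drop (k - n)).take n := by
        rw [← window_take w hik, ← window_take w' hik, htk]
      have hkl : k < w.length := by omega
      have hkl' : k < w'.length := by omega
      have hgg : w[k] = w'[k]'hkl' := by
        by_contra hne
        have hv : RS L n ((w.drop (k - n)).take n) :=
          ⟨window_len w (by omega), hI _ w (window_infix ..) hw.1, w[k], w'[k]'hkl', hne,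
            by rw [← window_succ w hik hkl]; exact hI _ w (window_infix ..) hw.1,
            by rw [hvv, ← window_succ w' hik hkl']; exact hI _ w' (window_infix ..) hw'.1⟩
        have := hw.2.2.2.1 (k - n) (by omega) hv
        omega
      rw [List.take_succ, List.take_succ, htk, List.getElem?_eq_getElem hkl,
        List.getElem?_eq_getElem hkl', hgg]
  rcases le_or_gt w.length (n + 1) with hle | hlt
  · have : w = w'.take (n + 1) := by rw [← h1, List.take_of_length_le hle]
    rw [this]
    exact List.take_prefix _ _
  · have := key w.length (by omega) le_rfl
    rw [List.take_length] at this
    exact List.prefix_iff_eq_take.2 this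

lemma irb_unique {L : Set (List A)} (hI : ∀ u w : List A, u <:+: w → w ∈ L → u ∈ L)
    {n : ℕ} {w w' : List A} (hw : IRB L n w) (hw' : IRB L n w')
    (hu : w.take n = w'.take n)
    (hg : ∀ (h : n < w.length) (h' : n < w'.length), w[n] = w'[n]) : w = w' := by
  rcases lt_or_ge n w.length with h | h
  · rcases lt_or_ge n w'.length with h' | h'
    · have ht : w.take (n + 1) = w'.take (n + 1) := by
        rw [List.take_succ, List.take_succ, hu, List.getElem?_eq_getElem h,
          List.getElem?_eq_getElem h', hg h h']
      rcases le_total w.length w'.length with hl | hl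
      · exact (hw.2 w' hw'.1 (take_eq_of_rbc hI hw.1 hw'.1 hl ht).isInfix).symm
      · exact hw'.2 w hw.1 (take_eq_of_rbc hI hw'.1 hw.1 hl ht.symm).isInfix
    · have hl' : w'.length = n := le_antisymm h' hw'.1.2.1
      have hpre : w' <+: w := by
        have : w' = w.take n := by rw [hu, ← hl', List.take_length]
        rw [this]; exact List.take_prefix _ _
      exact hw'.2 w hw.1 hpre.isInfix
  · have hl : w.length = n := le_antisymm h hw.1.2.1
    have hpre : w <+: w' := by
      have : w = w'.take n := by rw [← hu, ← hl, List.take_length]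
      rw [this]; exact List.take_prefix _ _
    exact (hw.2 w' hw'.1 hpre.isInfix).symm

lemma irb_inj [Finite A] {L : Set (List A)} (hI : ∀ u w : List A, u <:+: w → w ∈ L → u ∈ L)
    {n : ℕ} (hn : 1 ≤ n) :
    Function.Injective (fun w : {w : List A // IRB L n w} =>
      ((⟨w.1.take n, w.2.1.2.2.1⟩ : {u : List A // RS L n u}),
        if h : n < w.1.length then w.1[n] else w.1[0]'(Nat.lt_of_lt_of_le hn w.2.1.2.1))) := by
  intro w w' h
  simp only [Prod.mk.injEq, Subtype.mk.injEq] at h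
  obtain ⟨hu, hl⟩ := h
  exact Subtype.ext (irb_unique hI w.2 w'.2 hu
    (fun hh hh' => by rw [dif_pos hh, dif_pos hh'] at hl; exact hl))

lemma finite_irb [Finite A] {L : Set (List A)}
    (hI : ∀ u w : List A, u <:+: w → w ∈ L → u ∈ L) {n : ℕ} (hn : 1 ≤ n) :
    Finite {w : List A // IRB L n w} := by
  have := finite_rs L n
  exact Finite.of_injective _ (irb_inj hI hn)

/-- counting: c_n + #RS_n ≤ c_{n+1} -/
lemma cx_succ [Finite A] {L : Set (List A)}
    (hR : ∀ w ∈ L, ∃ a : A, w ++ [a] ∈ L) (n : ℕ) :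
    cx L n + Nat.card {u : List A // RS L n u} ≤ cx L (n + 1) := by
  classical
  have hf1 := finite_len L n
  have hf2 := finite_len L (n + 1)
  have hf3 := finite_rs L n
  have hb : ∀ (u : List A) (h : RS L n u), ∃ b : A, (u ++ [b]) ∈ L ∧ b ≠ (hR u h.2.1).choose := by
    intro u h
    obtain ⟨-, hu, a, b, hab, ha, hbb⟩ := id h
    by_cases hc : a = (hR u hu).choose
    · exact ⟨b, hbb, by rw [← hc]; exact hab.symm⟩
    · exact ⟨a, ha, hc⟩
  set G : {u : List A // u.length = n ∧ u ∈ L} ⊕ {u : List A // RS L n u} →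
      {w : List A // w.length = n + 1 ∧ w ∈ L} :=
    Sum.elim
      (fun u => ⟨u.1 ++ [(hR u.1 u.2.2).choose], by simp [u.2.1], (hR u.1 u.2.2).choose_spec⟩)
      (fun u => ⟨u.1 ++ [(hb u.1 u.2).choose], by simp [u.2.1], (hb u.1 u.2).choose_spec.1⟩)
    with hG
  have hGinj : Function.Injective G := by
    rintro (⟨u1, hu1⟩ | ⟨u1, hu1⟩) (⟨v1, hv1⟩ | ⟨v1, hv1⟩) h <;>
      simp only [hG, Sum.elim_inl, Sum.elim_inr, Subtype.mk.injEq] at h <;>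
      obtain ⟨h1, h2⟩ := List.append_inj h (by rw [hu1.1, hv1.1]) <;>
      simp only [List.cons.injEq, and_true] at h2 <;> subst h1
    · rfl
    · exact absurd h2.symm (hb u1 hv1).choose_spec.2
    · exact absurd h2 (hb u1 hu1).choose_spec.2
    · rfl
  calc cx L n + Nat.card {u : List A // RS L n u}
      = Nat.card ({u : List A // u.length = n ∧ u ∈ L} ⊕ {u : List A // RS L n u}) :=
        Nat.card_sum.symm
    _ ≤ Nat.card {w : List A // w.length = n + 1 ∧ w ∈ L} :=
        Nat.card_le_card_of_injective G hGinj
    _ = cx L (n + 1) := rfl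

/-- the right-side bound -/
lemma right_bound [Finite A] {L : Set (List A)}
    (hI : ∀ u w : List A, u <:+: w → w ∈ L → u ∈ L)
    (hR : ∀ w ∈ L, ∃ a : A, w ++ [a] ∈ L) {n : ℕ} (hn : 1 ≤ n) :
    Nat.card {w : List A // IRB L n w} ≤ Nat.card A * (cx L (n + 1) - cx L n) := by
  have hf3 := finite_rs L n
  have hrs : Nat.card {u : List A // RS L n u} ≤ cx L (n + 1) - cx L n :=
    le_tsub_of_add_le_left (cx_succ hR n)
  calc Nat.card {w : List A // IRB L n w}
      ≤ Nat.card ({u : List A // RS L n u} × A) :=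
        Nat.card_le_card_of_injective _ (irb_inj hI hn)
    _ = Nat.card {u : List A // RS L n u} * Nat.card A := Nat.card_prod _ _
    _ ≤ (cx L (n + 1) - cx L n) * Nat.card A := Nat.mul_le_mul_right _ hrs
    _ = Nat.card A * (cx L (n + 1) - cx L n) := Nat.mul_comm _ _

/-! reversal -/

def rev (L : Set (List A)) : Set (List A) := {w | w.reverse ∈ L}

lemma rev_rev (L : Set (List A)) : rev (rev L) = L := by
  ext w; simp [rev]

lemma rev_infix {L : Set (List A)} (hI : ∀ u w : List A, u <:+: w → w ∈ L → u ∈ L) :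
    ∀ u w : List A, u <:+: w → w ∈ rev L → u ∈ rev L := by
  intro u w h hw
  exact hI u.reverse w.reverse (List.reverse_infix.2 h) hw

lemma rev_right {L : Set (List A)} (hL : ∀ w ∈ L, ∃ a : A, a :: w ∈ L) :
    ∀ w ∈ rev L, ∃ a : A, w ++ [a] ∈ rev L := by
  intro w hw
  obtain ⟨a, ha⟩ := hL w.reverse hw
  exact ⟨a, by simp [rev]; simpa using ha⟩

lemma ls_rs {L : Set (List A)} {n : ℕ} {u : List A} :
    LS L n u ↔ RS (rev L) n u.reverse := by
  constructor
  · rintro ⟨h1, h2, c, d, hcd, hc, hd⟩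
    exact ⟨by simp [h1], by simpa [rev] using h2, c, d, hcd,
      by simp [rev]; simpa using hc, by simp [rev]; simpa using hd⟩
  · rintro ⟨h1, h2, c, d, hcd, hc, hd⟩
    refine ⟨by simpa using h1, by simpa [rev] using h2, c, d, hcd, ?_, ?_⟩
    · have := hc; simp [rev] at this; simpa using this
    · have := hd; simp [rev] at this; simpa using this

lemma rev_window (w : List A) {i n : ℕ} (h : i + n ≤ w.length) :
    (w.reverse.drop i).take n = ((w.drop (w.length - n - i)).take n).reverse := by
  rw [List.drop_reverse, List.take_reverse, List.drop_take, List.length_take]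
  congr 3 <;> omega

lemma lbc_rbc {L : Set (List A)} {n : ℕ} {w : List A} (h : LBC L n w) :
    RBC (rev L) n w.reverse := by
  obtain ⟨hmem, hlen, hsp, hone, hrep⟩ := h
  refine ⟨by simpa [rev] using hmem, by simpa, ?_, ?_, ?_⟩
  · have h0 : w.reverse.take n = ((w.drop (w.length - n)).take n).reverse := by
      have := rev_window w (i := 0) (n := n) (by omega)
      simpa using this
    rw [h0, List.take_of_length_le (by rw [List.length_drop]; omega)]
    exact ls_rs.mp hsp
  · intro i hi hrs
    rw [List.length_reverse] at hi
    rw [rev_window w hi] at hrs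
    have := hone (w.length - n - i) (by omega) (ls_rs.mpr hrs)
    omega
  · intro i j hi hj hww
    rw [List.length_reverse] at hi hj
    rw [rev_window w hi, rev_window w hj] at hww
    have := hrep _ _ (by omega) (by omega) (List.reverse_injective hww)
    omega

lemma rbc_lbc {L : Set (List A)} {n : ℕ} {w : List A} (h : RBC L n w) :
    LBC (rev L) n w.reverse := by
  obtain ⟨hmem, hlen, hsp, hone, hrep⟩ := h
  refine ⟨by simpa [rev] using hmem, by simpa, ?_, ?_, ?_⟩
  · have h0 : w.reverse.drop (w.reverse.length - n) = (w.take n).reverse := by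
      rw [List.length_reverse, List.drop_reverse]
      congr 2
      omega
    rw [h0, ls_rs (L := rev L), rev_rev, List.reverse_reverse]
    exact hsp
  · intro i hi hls
    rw [List.length_reverse] at hi ⊢
    rw [rev_window w hi] at hls
    rw [ls_rs (L := rev L), rev_rev, List.reverse_reverse] at hls
    have := hone _ (by omega) hls
    omega
  · intro i j hi hj hww
    rw [List.length_reverse] at hi hj
    rw [rev_window w hi, rev_window w hj] at hww
    have := hrep _ _ (by omega) (by omega) (List.reverse_injective hww)
    omega

lemma ilb_irb_rev {L : Set (List A)} {n : ℕ} {w : List A} (h : ILB L n w) :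
    IRB (rev L) n w.reverse := by
  refine ⟨lbc_rbc h.1, ?_⟩
  intro w' hw' hinf
  have h2 : LBC L n w'.reverse := by
    have := rbc_lbc hw'
    rwa [rev_rev] at this
  have h3 : w <:+: w'.reverse := by
    rw [← List.reverse_infix, List.reverse_reverse]
    exact hinf
  have h4 := h.2 w'.reverse h2 h3
  rw [← h4, List.reverse_reverse]

lemma cx_rev (L : Set (List A)) (k : ℕ) : cx (rev L) k = cx L k := by
  apply Nat.card_congr
  refine ⟨fun w => ⟨w.1.reverse, by simp [w.2.1], w.2.2⟩,
    fun w => ⟨w.1.reverse, by simp [w.2.1], by simpa [rev] using w.2.2⟩,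
    fun w => Subtype.ext (by simp), fun w => Subtype.ext (by simp)⟩

theorem main_bound [Finite A] (L : Set (List A))
    (hI : ∀ u w : List A, u <:+: w → w ∈ L → u ∈ L)
    (hR : ∀ w ∈ L, ∃ a : A, w ++ [a] ∈ L)
    (hL : ∀ w ∈ L, ∃ a : A, a :: w ∈ L)
    {n : ℕ} (hn : 1 ≤ n) :
    Nat.card {w : List A // IRB L n w ∨ ILB L n w} ≤
      2 * Nat.card A * (cx L (n + 1) - cx L n) := by
  classical
  have hIr := rev_infix hI
  have hRr := rev_right hL
  have hRbound := right_bound hI hR hn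
  have hLbound := right_bound hIr hRr hn
  rw [cx_rev, cx_rev] at hLbound
  have hfR : Finite {w : List A // IRB L n w} := finite_irb hI hn
  have hfRr : Finite {w : List A // IRB (rev L) n w} := finite_irb hIr hn
  have hfL : Finite {w : List A // ILB L n w} :=
    Finite.of_injective
      (fun w : {w : List A // ILB L n w} =>
        (⟨w.1.reverse, ilb_irb_rev w.2⟩ : {v : List A // IRB (rev L) n v}))
      (fun a b h => Subtype.ext (List.reverse_injective (congrArg Subtype.val h)))
  have hLB : Nat.card {w : List A // ILB L n w} ≤ Nat.card {w : List A // IRB (rev L) n w} :=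
    Nat.card_le_card_of_injective
      (fun w => ⟨w.1.reverse, ilb_irb_rev w.2⟩)
      (fun a b h => Subtype.ext (List.reverse_injective (congrArg Subtype.val h)))
  have hsum : Nat.card {w : List A // IRB L n w ∨ ILB L n w} ≤
      Nat.card {w : List A // IRB L n w} + Nat.card {w : List A // ILB L n w} := by
    rw [← Nat.card_sum]
    apply Nat.card_le_card_of_injective
      (fun w : {w : List A // IRB L n w ∨ ILB L n w} =>
        if h : IRB L n w.1 then Sum.inl ⟨w.1, h⟩ else Sum.inr ⟨w.1, w.2.resolve_left h⟩)
    intro a b h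
    apply Subtype.ext
    by_cases ha : IRB L n a.1 <;> by_cases hb : IRB L n b.1 <;>
      simp only [dif_pos, dif_neg, ha, hb] at h <;>
      simp_all
  calc Nat.card {w : List A // IRB L n w ∨ ILB L n w}
      ≤ Nat.card {w : List A // IRB L n w} + Nat.card {w : List A // ILB L n w} := hsum
    _ ≤ Nat.card A * (cx L (n + 1) - cx L n) + Nat.card A * (cx L (n + 1) - cx L n) :=
        Nat.add_le_add hRbound (hLB.trans hLbound)
    _ = 2 * Nat.card A * (cx L (n + 1) - cx L n) := by ring

end BW



lemma lang_infix {A : Type} (X : Set (ℤ → A)) :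
    ∀ u w : List A, u <:+: w → w ∈ language X → u ∈ language X := by
  rintro u w ⟨s, t, rfl⟩ ⟨x, hx, i, hocc⟩
  refine ⟨x, hx, i + s.length, ?_⟩
  intro j
  have hjlen : s.length + (j : ℕ) < (s ++ u ++ t).length := by
    simp only [List.length_append]; omega
  have h1 := hocc ⟨s.length + j, hjlen⟩
  have h2 : (s ++ u ++ t).get ⟨s.length + j, hjlen⟩ = u.get j := by
    simp only [List.get_eq_getElem]
    rw [List.getElem_append_left (by simp only [List.length_append]; omega),
      List.getElem_append_right (by omega)]
    simp
  rw [h2] at h1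
  rw [← h1]
  congr 1
  push_cast
  ring

lemma lang_right {A : Type} (X : Set (ℤ → A)) :
    ∀ w ∈ language X, ∃ a : A, w ++ [a] ∈ language X := by
  rintro w ⟨x, hx, i, hocc⟩
  refine ⟨x (i + w.length), x, hx, i, ?_⟩
  intro j
  have hlt : (j : ℕ) < w.length + 1 := by simpa using j.2
  rcases lt_or_ge (j : ℕ) w.length with hj | hj
  · simp only [List.get_eq_getElem]
    rw [List.getElem_append_left hj]
    simpa using hocc ⟨j, hj⟩
  · have hj2 : (j : ℕ) = w.length := by omega
    simp only [List.get_eq_getElem]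
    rw [List.getElem_append_right (by omega)]
    simp [hj2]

lemma lang_left {A : Type} (X : Set (ℤ → A)) :
    ∀ w ∈ language X, ∃ a : A, a :: w ∈ language X := by
  rintro w ⟨x, hx, i, hocc⟩
  refine ⟨x (i - 1), x, hx, i - 1, ?_⟩
  rintro ⟨jv, hjv⟩
  simp only [List.get_eq_getElem]
  rcases Nat.eq_zero_or_pos jv with hj | hj
  · subst hj; simp
  · obtain ⟨k, hk⟩ : ∃ k, jv = k + 1 := ⟨jv - 1, by omega⟩
    subst hk
    have hkw : k < w.length := by simp only [List.length_cons] at hjv; omega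
    have h1 : x (i + (k : ℤ)) = w[k] := by simpa using hocc ⟨k, hkw⟩
    rw [List.getElem_cons_succ, ← h1]
    congr 1
    push_cast
    ring

/-- The number of `n`-branch words is at most
`2|A|(c_{n+1}(X) - c_n(X))`. -/
theorem card_branch_words_le
    {A : Type} [Fintype A] [TopologicalSpace A] [DiscreteTopology A]
    (X : Set (ℤ → A)) (hX : IsSubshift X) (n : ℕ) (hn : 1 ≤ n) :
    Nat.card {w : List A // IsBranchWord X n w} ≤
      2 * Fintype.card A * (complexity X (n + 1) - complexity X n) := by
  have h := BW.main_bound (language X) (lang_infix X) (lang_right X) (lang_left X) hn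
  rw [Nat.card_eq_fintype_card (α := A)] at h
  exact h
end

section
/- Let X be a subshift over a finite alphabet A, let n ≥ 1, and set N = ⌊(n−1)/2⌋. Suppose φ₁ and φ₂ are automorphisms of X of range N, with inducing block maps Φ₁, Φ₂ : A^{2N+1} → A respectively, both φ₁ and φ₂ fix every isolated periodic point of X, and Φ₁(w) = Φ₂(w) for every n-branch word w of X. Then φ₁ = φ₂. -/
open Filter Topology

/-- `x` is an isolated point of `X`. -/
def IsIsolatedPoint {A : Type} [TopologicalSpace A] (X : Set (ℤ → A)) (x : ℤ → A) : Prop :=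
  ∃ U : Set (ℤ → A), IsOpen U ∧ U ∩ X = {x}

/-- `x` is an isolated periodic point of `X`. -/
def IsIsolatedPeriodicPt {A : Type} [TopologicalSpace A] (X : Set (ℤ → A)) (x : ℤ → A) : Prop :=
  x ∈ X ∧ IsIsolatedPoint X x ∧ ∃ p : ℕ, 1 ≤ p ∧ ∀ m : ℤ, x (m + (p : ℤ)) = x m

/-- The action of a block map `Φ` of range `N` on a word `w`, producing a word of
length `w.length - 2N`. -/
def blockApply {A : Type} (N : ℕ) (Φ : (Fin (2 * N + 1) → A) → A) (w : List A) : List A :=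
  List.ofFn (fun j : Fin (w.length - 2 * N) =>
    Φ (fun i : Fin (2 * N + 1) => w.get ⟨(j : ℕ) + (i : ℕ), by
      have hj := j.isLt; have hi := i.isLt; omega⟩))

/-!
Fix `x ∈ X` and a position `p`, and walk leftwards through the `n`-words of `x` ending the
walk at the first right-special word or the first repeated `n`-word (one of the two occurs,
as there are finitely many `n`-words). In the first case the stretch of `x` walked over is a
right-branch candidate, so it sits inside an `n`-right branch word. In the second case, since a
non-right-special word has a unique successor, the words of `x` cycle from the repetition on, are
never right-special, and `x` is determined on a right half-line by a single `n`-word.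
Walking rightwards with left-special words gives the mirror dichotomy. If no branch word
arises on either side, `x` is determined by one `n`-word, hence isolated, and periodic since
`σ^d x` shares that word. So every `(2N+1)`-window of `x` lies in a branch word, where
`Φ₁ = Φ₂`, unless `x` is fixed by both automorphisms.
-/

open Function

variable {A : Type}

theorem forall_mem_of_step_of_return {α : Type*} {D : Set α} {a : ℕ → α} {d : ℕ} (hd : 0 < d)
    (hstep : ∀ s t, a s = a t → a s ∈ D → a (s + 1) = a (t + 1))
    (hret : a d = a 0) (hD : ∀ t < d, a t ∈ D) (t : ℕ) : a t ∈ D := by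
  have key : ∀ t, a (t + d) = a t ∧ a t ∈ D := by
    intro t
    induction t using Nat.strong_induction_on with
    | _ t ih =>
      refine ⟨?_, ?_⟩
      · rcases t with _ | s
        · simpa using hret
        · obtain ⟨hper, hmem⟩ := ih s (Nat.lt_succ_self s)
          simpa [Nat.add_right_comm] using (hstep s (s + d) hper.symm hmem).symm
      · rcases lt_or_ge t d with h | h
        · exact hD t h
        · obtain ⟨hper, hmem⟩ := ih (t - d) (by omega)
          rw [Nat.sub_add_cancel h] at hper
          exact hper ▸ hmem
  exact (key t).2

theorem exists_first_or_repeat {α : Type*} (a : ℕ → α) (S : α → Prop) (ha : ¬ Injective a) :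
    (∃ k, S (a k) ∧ (∀ i < k, ¬ S (a i)) ∧ Set.InjOn a (Set.Iic k)) ∨
      ∃ k, ∃ j < k, a k = a j ∧ ∀ i ≤ k, ¬ S (a i) := by
  classical
  have hex : ∃ k, S (a k) ∨ ∃ j < k, a k = a j := by
    simp only [Injective, not_forall] at ha
    obtain ⟨i, j, hij, hne⟩ := ha
    rcases lt_or_gt_of_ne hne with h | h
    · exact ⟨j, .inr ⟨i, h, hij.symm⟩⟩
    · exact ⟨i, .inr ⟨j, h, hij⟩⟩
  set k := Nat.find hex
  have hmin : ∀ i < k, ¬ S (a i) ∧ ∀ j < i, a i ≠ a j := fun i hi => by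
    simpa using Nat.find_min hex hi
  rcases Nat.find_spec hex with hS | ⟨j, hj, hkj⟩
  · refine .inl ⟨k, hS, fun i hi => (hmin i hi).1, ?_⟩
    have hne : ∀ i j, i < j → j ≤ k → a j ≠ a i := by
      intro i j hij hjk heq
      rcases hjk.lt_or_eq with hjk | rfl
      · exact (hmin j hjk).2 i hij heq
      · exact (hmin i hij).1 (heq ▸ hS)
    intro i hi j hj heq
    rcases lt_trichotomy i j with h | h | h
    · exact absurd heq.symm (hne i j h hj)
    · exact h
    · exact absurd heq (hne j i h hi)
  · refine .inr ⟨k, j, hj, hkj, fun i hi => ?_⟩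
    rcases hi.lt_or_eq with hi | rfl
    · exact (hmin i hi).1
    · exact hkj ▸ (hmin j hj).1

theorem exists_maximal_infix [Finite A] {C : List A → Prop} {B : ℕ}
    (hB : ∀ w, C w → w.length ≤ B) {w : List A} (hw : C w) :
    ∃ w', (C w' ∧ ∀ w'', C w'' → w' <:+: w'' → w'' = w') ∧ w <:+: w' := by
  set s := {w' | C w' ∧ w <:+: w'}
  have hs : s.Finite := (List.finite_length_le A B).subset fun w' hw' => hB w' hw'.1
  obtain ⟨w', ⟨hCw', hww'⟩, hmax⟩ :=
    Set.exists_max_image s List.length hs ⟨w, hw, List.infix_refl w⟩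
  refine ⟨w', ⟨hCw', fun w'' hCw'' hw'w'' => ?_⟩, hww'⟩
  exact (hw'w''.eq_of_length_le (hmax w'' ⟨hCw'', hww'.trans hw'w''⟩)).symm

theorem length_le_of_injective_windows [Finite A] {n : ℕ} {w : List A} (hn : n ≤ w.length)
    (hinj : ∀ i j, i + n ≤ w.length → j + n ≤ w.length →
      (w.drop i).take n = (w.drop j).take n → i = j) :
    w.length ≤ n + Nat.card {l : List A | l.length = n} := by
  have := (List.finite_length_eq A n).to_subtype
  let window : Fin (w.length - n + 1) → {l : List A | l.length = n} :=
    fun i => ⟨(w.drop i).take n, by simp; omega⟩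
  have hwin : Injective window := fun i j h =>
    Fin.ext (hinj i j (by omega) (by omega) (congrArg Subtype.val h))
  have := Nat.card_le_card_of_injective window hwin
  simp only [Nat.card_eq_fintype_card, Fintype.card_fin] at this
  omega

theorem apply_eq_of_blockApply_eq {N : ℕ} {Φ₁ Φ₂ : (Fin (2 * N + 1) → A) → A} {w : List A}
    (h : blockApply N Φ₁ w = blockApply N Φ₂ w) {f : Fin (2 * N + 1) → A}
    (hf : List.ofFn f <:+: w) : Φ₁ f = Φ₂ f := by
  obtain ⟨s, t, rfl⟩ := hf
  have hs : s.length < (s ++ List.ofFn f ++ t).length - 2 * N := by simp; omega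
  convert congrFun (List.ofFn_inj.mp h) ⟨s.length, hs⟩ using 2 <;>
  · funext i
    simp only [List.get_eq_getElem, List.append_assoc]
    rw [List.getElem_append_right (by omega), List.getElem_append_left (by simp; omega)]
    simp only [Nat.add_sub_cancel_left, List.getElem_ofFn]

def wordAt (x : ℤ → A) (i : ℤ) (k : ℕ) : List A :=
  List.ofFn fun j : Fin k => x (i + j)

@[simp]
theorem length_wordAt (x : ℤ → A) (i : ℤ) (k : ℕ) : (wordAt x i k).length = k := by
  simp [wordAt]

theorem wordAt_succ (x : ℤ → A) (i : ℤ) (k : ℕ) :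
    wordAt x i (k + 1) = x i :: wordAt x (i + 1) k := by
  simp [wordAt, List.ofFn_succ, add_assoc, add_comm (1 : ℤ)]

theorem wordAt_succ' (x : ℤ → A) (i : ℤ) (k : ℕ) :
    wordAt x i (k + 1) = wordAt x i k ++ [x (i + k)] := by
  simp only [wordAt, List.ofFn_succ', List.concat_eq_append, Fin.val_castSucc, Fin.val_last]

theorem drop_take_wordAt (x : ℤ → A) (i : ℤ) {j k L : ℕ} (h : j + k ≤ L) :
    ((wordAt x i L).drop j).take k = wordAt x (i + j) k := by
  apply List.ext_getElem (by simp; omega)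
  intro l _ _
  simp [wordAt, add_assoc]

theorem wordAt_infix_wordAt (x : ℤ → A) (i : ℤ) {j k L : ℕ} (h : j + k ≤ L) :
    wordAt x (i + j) k <:+: wordAt x i L := by
  rw [← drop_take_wordAt x i h]
  exact (List.take_prefix _ _).isInfix.trans (List.drop_suffix _ _).isInfix

theorem wordAt_prefix_wordAt (x : ℤ → A) (i : ℤ) {k L : ℕ} (h : k ≤ L) :
    wordAt x i k <+: wordAt x i L := by
  have h' := drop_take_wordAt x i (j := 0) (by omega : 0 + k ≤ L)
  rw [List.drop_zero, Nat.cast_zero, add_zero] at h'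
  exact h' ▸ List.take_prefix k _

theorem wordAt_mem_language {X : Set (ℤ → A)} {x : ℤ → A} (hx : x ∈ X) (i : ℤ) (k : ℕ) :
    wordAt x i k ∈ language X :=
  ⟨x, hx, i, fun j => by rw [List.get_eq_getElem]; simp [wordAt]⟩

theorem wordAt_shift (x : ℤ → A) (d : ℤ) (i : ℤ) (k : ℕ) :
    wordAt (fun j => x (j + d)) i k = wordAt x (i + d) k := by
  simp [wordAt, add_right_comm]

theorem apply_eq_of_wordAt_eq {x y : ℤ → A} {i j : ℤ} {k : ℕ} (h : wordAt x i k = wordAt y j k)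
    (hk : 0 < k) : x i = y j := by
  obtain ⟨k, rfl⟩ := Nat.exists_eq_add_one_of_ne_zero hk.ne'
  rw [wordAt_succ, wordAt_succ] at h
  exact (List.cons_eq_cons.mp h).1

section Determinism

variable {X : Set (ℤ → A)} {x y : ℤ → A} {n : ℕ}

theorem wordAt_add_one_eq (hx : x ∈ X) (hy : y ∈ X) {i j : ℤ} (h : wordAt x i n = wordAt y j n)
    (hrs : ¬ RightSpecial X n (wordAt x i n)) : wordAt x (i + 1) n = wordAt y (j + 1) n := by
  have hnext : x (i + n) = y (j + n) := by
    by_contra hne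
    refine hrs ⟨by simp, wordAt_mem_language hx i n, _, _, hne, ?_, ?_⟩
    · simpa only [wordAt_succ'] using wordAt_mem_language hx i (n + 1)
    · simpa only [h, wordAt_succ'] using wordAt_mem_language hy j (n + 1)
  have h' : wordAt x i (n + 1) = wordAt y j (n + 1) := by rw [wordAt_succ', wordAt_succ', h, hnext]
  rw [wordAt_succ, wordAt_succ] at h'
  exact (List.cons_eq_cons.mp h').2

theorem wordAt_sub_one_eq (hx : x ∈ X) (hy : y ∈ X) {i j : ℤ} (h : wordAt x i n = wordAt y j n)
    (hls : ¬ LeftSpecial X n (wordAt x i n)) : wordAt x (i - 1) n = wordAt y (j - 1) n := by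
  have hprev : x (i - 1) = y (j - 1) := by
    by_contra hne
    refine hls ⟨by simp, wordAt_mem_language hx i n, _, _, hne, ?_, ?_⟩
    · simpa only [wordAt_succ, sub_add_cancel] using wordAt_mem_language hx (i - 1) (n + 1)
    · simpa only [h, wordAt_succ, sub_add_cancel] using wordAt_mem_language hy (j - 1) (n + 1)
  have h' : wordAt x (i - 1) (n + 1) = wordAt y (j - 1) (n + 1) := by
    rw [wordAt_succ, wordAt_succ, sub_add_cancel, sub_add_cancel, h, hprev]
  rw [wordAt_succ', wordAt_succ'] at h'
  exact List.append_inj_left' h' rfl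

theorem wordAt_add_eq_of_forall_not_rightSpecial (hx : x ∈ X) (hy : y ∈ X) {q : ℤ}
    (hrs : ∀ t : ℕ, ¬ RightSpecial X n (wordAt x (q + t) n)) (h : wordAt y q n = wordAt x q n)
    (t : ℕ) : wordAt y (q + t) n = wordAt x (q + t) n := by
  induction t with
  | zero => simpa using h
  | succ t ih =>
    rw [Nat.cast_succ, ← add_assoc]
    exact (wordAt_add_one_eq hx hy ih.symm (hrs t)).symm

theorem wordAt_sub_eq_of_forall_not_leftSpecial (hx : x ∈ X) (hy : y ∈ X) {q : ℤ}
    (hls : ∀ t : ℕ, ¬ LeftSpecial X n (wordAt x (q - t) n)) (h : wordAt y q n = wordAt x q n)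
    (t : ℕ) : wordAt y (q - t) n = wordAt x (q - t) n := by
  induction t with
  | zero => simpa using h
  | succ t ih =>
    rw [Nat.cast_succ, ← sub_sub]
    exact (wordAt_sub_one_eq hx hy ih.symm (hls t)).symm

theorem forall_not_rightSpecial_of_return (hx : x ∈ X) {q : ℤ} {d : ℕ} (hd : 0 < d)
    (hret : wordAt x (q + d) n = wordAt x q n)
    (hrs : ∀ t < d, ¬ RightSpecial X n (wordAt x (q + t) n)) (t : ℕ) :
    ¬ RightSpecial X n (wordAt x (q + t) n) :=
  forall_mem_of_step_of_return (a := fun t : ℕ => wordAt x (q + t) n)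
    (D := {w | ¬ RightSpecial X n w}) hd
    (fun s t h hs => by simpa only [Nat.cast_succ, ← add_assoc] using wordAt_add_one_eq hx hx h hs)
    (by simpa using hret) hrs t

theorem forall_not_leftSpecial_of_return (hx : x ∈ X) {q : ℤ} {d : ℕ} (hd : 0 < d)
    (hret : wordAt x (q - d) n = wordAt x q n)
    (hls : ∀ t < d, ¬ LeftSpecial X n (wordAt x (q - t) n)) (t : ℕ) :
    ¬ LeftSpecial X n (wordAt x (q - t) n) :=
  forall_mem_of_step_of_return (a := fun t : ℕ => wordAt x (q - t) n)
    (D := {w | ¬ LeftSpecial X n w}) hd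
    (fun s t h hs => by simpa only [Nat.cast_succ, ← sub_sub] using wordAt_sub_one_eq hx hx h hs)
    (by simpa using hret) hls t

end Determinism

theorem not_injective_of_forall_length_eq [Finite A] {a : ℕ → List A} {n : ℕ}
    (h : ∀ t, (a t).length = n) : ¬ Injective a := fun hinj =>
  Set.infinite_range_of_injective hinj <|
    (List.finite_length_eq A n).subset (by rintro _ ⟨t, rfl⟩; exact h t)

section Dichotomy

variable [Finite A] {X : Set (ℤ → A)} {x : ℤ → A}

theorem rightBranchCand_or_forall_not_rightSpecial (hx : x ∈ X) (n : ℕ) (p : ℤ) :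
    (∃ k : ℕ, RightBranchCand X n (wordAt x (p - k) (k + n))) ∨
      ∃ q ≤ p, ∃ d : ℕ, 0 < d ∧ wordAt x (q + d) n = wordAt x q n ∧
        ∀ t : ℕ, ¬ RightSpecial X n (wordAt x (q + t) n) := by
  rcases exists_first_or_repeat (fun k : ℕ => wordAt x (p - k) n) (RightSpecial X n)
      (not_injective_of_forall_length_eq fun _ => length_wordAt _ _ _) with
    ⟨k, hrs, hfirst, hinj⟩ | ⟨k, j, hjk, hrep, hnrs⟩
  · have hwin : ∀ i ≤ k,
        ((wordAt x (p - k) (k + n)).drop i).take n = wordAt x (p - ↑(k - i)) n := by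
      intro i hi
      rw [drop_take_wordAt _ _ (by omega)]
      congr 1
      omega
    refine .inl ⟨k, wordAt_mem_language hx _ _, by simp, ?_, ?_, ?_⟩
    · have h0 := hwin 0 k.zero_le
      rw [List.drop_zero, Nat.sub_zero] at h0
      rwa [h0]
    · intro i hi hrsi
      rw [length_wordAt] at hi
      rw [hwin i (by omega)] at hrsi
      by_contra
      exact hfirst (k - i) (by omega) hrsi
    · intro i j hi hj hij
      rw [length_wordAt] at hi hj
      rw [hwin i (by omega), hwin j (by omega)] at hij
      have := hinj (Set.mem_Iic.2 (by omega)) (Set.mem_Iic.2 (by omega)) hij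
      omega
  · have hret : wordAt x (p - k + ↑(k - j)) n = wordAt x (p - k) n := by
      rw [show p - k + ↑(k - j) = p - j by omega]
      exact hrep.symm
    refine .inr ⟨p - k, by omega, k - j, by omega, hret,
      forall_not_rightSpecial_of_return hx (by omega) hret fun t ht => ?_⟩
    rw [show p - k + t = p - ↑(k - t) by omega]
    exact hnrs _ (by omega)

theorem leftBranchCand_or_forall_not_leftSpecial (hx : x ∈ X) (n : ℕ) (p : ℤ) :
    (∃ k : ℕ, LeftBranchCand X n (wordAt x p (k + n))) ∨
      ∀ t : ℕ, ¬ LeftSpecial X n (wordAt x (p - t) n) := by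
  rcases exists_first_or_repeat (fun k : ℕ => wordAt x (p + k) n) (LeftSpecial X n)
      (not_injective_of_forall_length_eq fun _ => length_wordAt _ _ _) with
    ⟨k, hls, hfirst, hinj⟩ | ⟨k, j, hjk, hrep, hnls⟩
  · have hwin : ∀ i ≤ k, ((wordAt x p (k + n)).drop i).take n = wordAt x (p + i) n :=
      fun i hi => drop_take_wordAt _ _ (by omega)
    refine .inl ⟨k, wordAt_mem_language hx _ _, by simp, ?_, ?_, ?_⟩
    · have hlast : (wordAt x p (k + n)).drop k = wordAt x (p + k) n := by
        rw [← hwin k le_rfl, List.take_of_length_le (by simp)]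
      rwa [length_wordAt, Nat.add_sub_cancel, hlast]
    · intro i hi hlsi
      rw [length_wordAt] at hi ⊢
      rw [hwin i (by omega)] at hlsi
      by_contra
      exact hfirst i (by omega) hlsi
    · intro i j hi hj hij
      rw [length_wordAt] at hi hj
      rw [hwin i (by omega), hwin j (by omega)] at hij
      exact hinj (Set.mem_Iic.2 (by omega)) (Set.mem_Iic.2 (by omega)) hij
  · have hret : wordAt x (p + k - ↑(k - j)) n = wordAt x (p + k) n := by
      rw [show p + k - ↑(k - j) = p + j by omega]
      exact hrep.symm
    refine .inr fun t => ?_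
    have := forall_not_leftSpecial_of_return hx (by omega) hret (fun s hs => ?_) (k + t)
    · rwa [show p + k - ↑(k + t) = p - t by push_cast; ring] at this
    · rw [show p + k - s = p + ↑(k - s) by omega]
      exact hnls _ (by omega)

end Dichotomy

theorem IsSubshift.shift_mem [TopologicalSpace A] {X : Set (ℤ → A)} (hX : IsSubshift X)
    {x : ℤ → A} (hx : x ∈ X) (d : ℕ) : (fun i => x (i + d)) ∈ X := by
  induction d with
  | zero => simpa using hx
  | succ d ih =>
    have h := hX.2 ▸ Set.mem_image_of_mem (shiftPerm A) ih
    convert h using 1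
    funext i
    show x (i + ↑(d + 1)) = x (i + 1 + d)
    congr 1
    push_cast
    ring

theorem isIsolatedPeriodicPt_of_forall_not_special [TopologicalSpace A] [DiscreteTopology A]
    {X : Set (ℤ → A)} (hX : IsSubshift X) {x : ℤ → A} (hx : x ∈ X) {n : ℕ} (hn : 0 < n)
    {p q : ℤ} (hqp : q ≤ p) {d : ℕ} (hd : 0 < d) (hret : wordAt x (q + d) n = wordAt x q n)
    (hrs : ∀ t : ℕ, ¬ RightSpecial X n (wordAt x (q + t) n))
    (hls : ∀ t : ℕ, ¬ LeftSpecial X n (wordAt x (p - t) n)) :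
    IsIsolatedPeriodicPt X x := by
  have hdet : ∀ y ∈ X, wordAt y q n = wordAt x q n → y = x := by
    intro y hy h
    have hfwd := wordAt_add_eq_of_forall_not_rightSpecial hx hy hrs h
    obtain ⟨s, rfl⟩ := Int.le.dest hqp
    have hbwd := wordAt_sub_eq_of_forall_not_leftSpecial hx hy hls (hfwd s)
    funext i
    rcases le_total q i with hi | hi
    · obtain ⟨t, rfl⟩ := Int.le.dest hi
      exact apply_eq_of_wordAt_eq (hfwd t) hn
    · obtain ⟨t, ht⟩ := Int.le.dest (hi.trans (Int.le_add_of_nonneg_right s.cast_nonneg))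
      rw [show i = q + s - t by omega]
      exact apply_eq_of_wordAt_eq (hbwd t) hn
  have hcyl : {y | wordAt y q n = wordAt x q n} =
      (fun (y : ℤ → A) (j : Fin n) => y (q + j)) ⁻¹' {fun j : Fin n => x (q + j)} := by
    ext y
    simp [wordAt, List.ofFn_inj]
  refine ⟨hx, ⟨{y | wordAt y q n = wordAt x q n}, ?_, ?_⟩, d, hd, fun m => ?_⟩
  · rw [hcyl]
    exact (isOpen_discrete _).preimage (continuous_pi fun j => continuous_apply _)
  · ext y
    exact ⟨fun ⟨h, hy⟩ => hdet y hy h, by rintro rfl; exact ⟨rfl, hx⟩⟩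
  · refine congrFun (hdet _ (hX.shift_mem hx d) ?_) m
    rw [wordAt_shift]
    exact hret

theorem exists_isBranchWord_infix_or_isIsolatedPeriodicPt [Finite A] [TopologicalSpace A]
    [DiscreteTopology A] {X : Set (ℤ → A)} (hX : IsSubshift X) {x : ℤ → A} (hx : x ∈ X)
    {n : ℕ} (hn : 0 < n) (p : ℤ) :
    (∃ w, IsBranchWord X n w ∧ wordAt x p n <:+: w) ∨ IsIsolatedPeriodicPt X x := by
  obtain ⟨k, hk⟩ | ⟨q, hqp, d, hd, hret, hrs⟩ := rightBranchCand_or_forall_not_rightSpecial hx n p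
  · obtain ⟨w, hw, hkw⟩ := exists_maximal_infix
      (fun w hw => length_le_of_injective_windows hw.2.1 hw.2.2.2.2) hk
    have hpk : wordAt x p n <:+: wordAt x (p - k) (k + n) := by
      simpa using wordAt_infix_wordAt x (p - k) (le_refl (k + n))
    exact .inl ⟨w, .inl hw, hpk.trans hkw⟩
  obtain ⟨k, hk⟩ | hls := leftBranchCand_or_forall_not_leftSpecial hx n p
  · obtain ⟨w, hw, hkw⟩ := exists_maximal_infix
      (fun w hw => length_le_of_injective_windows hw.2.1 hw.2.2.2.2) hk
    have hpk : wordAt x p n <:+: wordAt x p (k + n) :=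
      (wordAt_prefix_wordAt x p (by omega : n ≤ k + n)).isInfix
    exact .inl ⟨w, .inr hw, hpk.trans hkw⟩
  exact .inr (isIsolatedPeriodicPt_of_forall_not_special hX hx hn hqp hd hret hrs hls)

theorem aut_eq_of_agree_on_branch_words_general
    {A : Type} [Fintype A] [TopologicalSpace A] [DiscreteTopology A]
    (X : Set (ℤ → A)) (hX : IsSubshift X) (n : ℕ) (hn : 1 ≤ n)
    (φ₁ φ₂ : Equiv.Perm ↥X)
    (Φ₁ Φ₂ : (Fin (2 * ((n - 1) / 2) + 1) → A) → A)
    (hind₁ : InducedBy φ₁ ((n - 1) / 2) Φ₁) (hind₂ : InducedBy φ₂ ((n - 1) / 2) Φ₂)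
    (hfix₁ : ∀ x : ↥X, IsIsolatedPeriodicPt X ↑x → φ₁ x = x)
    (hfix₂ : ∀ x : ↥X, IsIsolatedPeriodicPt X ↑x → φ₂ x = x)
    (hagree : ∀ w : List A, IsBranchWord X n w →
      blockApply ((n - 1) / 2) Φ₁ w = blockApply ((n - 1) / 2) Φ₂ w) :
    φ₁ = φ₂ := by
  ext x m
  set N := (n - 1) / 2
  obtain ⟨w, hw, hxw⟩ | hiso :=
    exists_isBranchWord_infix_or_isIsolatedPeriodicPt hX x.2 hn (m - N)
  · rw [hind₁, hind₂]
    refine apply_eq_of_blockApply_eq (hagree w hw) (List.IsInfix.trans ?_ hxw)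
    exact (wordAt_prefix_wordAt (x : ℤ → A) (m - N) (by omega : 2 * N + 1 ≤ n)).isInfix
  · rw [hfix₁ x hiso, hfix₂ x hiso]

/-- Two automorphisms of range `⌊(n-1)/2⌋` which fix all isolated
periodic points and whose block maps agree on all `n`-branch words are equal. -/
theorem aut_eq_of_agree_on_branch_words
    {A : Type} [Fintype A] [TopologicalSpace A] [DiscreteTopology A]
    (X : Set (ℤ → A)) (hX : IsSubshift X) (n : ℕ) (hn : 1 ≤ n)
    (φ₁ φ₂ : Equiv.Perm ↥X) (hφ₁ : φ₁ ∈ Aut hX) (hφ₂ : φ₂ ∈ Aut hX)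
    (Φ₁ Φ₂ : (Fin (2 * ((n - 1) / 2) + 1) → A) → A)
    (hind₁ : InducedBy φ₁ ((n - 1) / 2) Φ₁) (hind₂ : InducedBy φ₂ ((n - 1) / 2) Φ₂)
    (hfix₁ : ∀ x : ↥X, IsIsolatedPeriodicPt X ↑x → φ₁ x = x)
    (hfix₂ : ∀ x : ↥X, IsIsolatedPeriodicPt X ↑x → φ₂ x = x)
    (hagree : ∀ w : List A, IsBranchWord X n w →
      blockApply ((n - 1) / 2) Φ₁ w = blockApply ((n - 1) / 2) Φ₂ w) :
    φ₁ = φ₂ :=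
  aut_eq_of_agree_on_branch_words_general X hX n hn φ₁ φ₂ Φ₁ Φ₂ hind₁ hind₂ hfix₁ hfix₂ hagree
end

section
/- Let X be a subshift over a finite alphabet A satisfying liminf_{n→∞} (log(c_n(X)/n))/(log log log n) = 0. Then for every ε > 0, liminf_{n→∞} (c_n(X) − Σ_{i=2}^n ⌊(log log i)^ε⌋) = −∞. -/
open Filter Topology

private lemma loglog2_gt_neg_one : (-1 : ℝ) < Real.log (Real.log 2) := by
  rw [Real.lt_log_iff_exp_lt (Real.log_pos one_lt_two)]
  have h1 := Real.exp_one_gt_d9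
  have h2 := Real.log_two_gt_d9
  have h3 := Real.exp_pos 1
  have h4 : Real.exp (-1) * Real.exp 1 = 1 := by
    rw [← Real.exp_add]; norm_num
  nlinarith [Real.exp_pos (-1)]

private lemma floor_term_ge_neg_one {ε : ℝ} (hε : 0 < ε) {i : ℕ} (hi : 2 ≤ i) :
    (-1 : ℝ) ≤ (⌊Real.log (Real.log (i : ℝ)) ^ ε⌋ : ℝ) := by
  have key : (-1 : ℝ) ≤ Real.log (Real.log (i : ℝ)) ^ ε := by
    set b := Real.log (Real.log (i : ℝ)) with hb
    rcases le_or_gt 0 b with h | h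
    · exact le_trans (by norm_num) (Real.rpow_nonneg h ε)
    · rw [Real.rpow_def_of_neg h]
      have hblb : Real.log (Real.log 2) ≤ b := by
        have h2 : (2:ℝ) ≤ (i:ℝ) := by exact_mod_cast hi
        exact Real.log_le_log (Real.log_pos one_lt_two) (Real.log_le_log two_pos h2)
      have habs : |b| < 1 := by
        rw [abs_lt]
        exact ⟨lt_of_lt_of_le loglog2_gt_neg_one hblb, lt_trans h one_pos⟩
      have hlogb : Real.log b < 0 := by
        rw [← Real.log_abs]
        exact Real.log_neg (abs_pos.mpr (ne_of_lt h)) habs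
      have he : Real.exp (Real.log b * ε) ≤ 1 := by
        rw [← Real.exp_zero]
        exact Real.exp_le_exp.mpr (by nlinarith)
      have hc := Real.neg_one_le_cos (ε * Real.pi)
      have hp := (Real.exp_pos (Real.log b * ε)).le
      nlinarith
  have : (-1 : ℤ) ≤ ⌊Real.log (Real.log (i : ℝ)) ^ ε⌋ :=
    Int.le_floor.mpr (by exact_mod_cast key)
  exact_mod_cast this

private lemma eventually_rpow_ineq {ε : ℝ} (hε : 0 < ε) :
    ∀ᶠ u : ℝ in atTop, 2 * u ^ (ε/2) + 5 ≤ (u - Real.log 2) ^ ε := by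
  have hv : Tendsto (fun u : ℝ => u ^ (ε/2)) atTop atTop :=
    tendsto_rpow_atTop (by positivity)
  filter_upwards [hv.eventually_ge_atTop ((2:ℝ) ^ ε * 7), hv.eventually_ge_atTop 1,
      eventually_ge_atTop (1 : ℝ), eventually_ge_atTop (2 * Real.log 2)] with u h1 h3 hu1 hu2
  have hu0 : (0:ℝ) < u := by linarith
  have h2pos : (0:ℝ) < (2:ℝ) ^ ε := Real.rpow_pos_of_pos two_pos ε
  have step1 : (u/2) ^ ε ≤ (u - Real.log 2) ^ ε :=
    Real.rpow_le_rpow (by positivity) (by linarith) hε.le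
  have step2 : (u/2) ^ ε = u ^ ε / 2 ^ ε := Real.div_rpow hu0.le (by norm_num) ε
  have step3 : u ^ ε = u ^ (ε/2) * u ^ (ε/2) := by
    rw [← Real.rpow_add hu0]
    congr 1
    ring
  set v := u ^ (ε/2) with hvdef
  have hvkey : 2 ^ ε * (2 * v + 5) ≤ v * v := by
    nlinarith [mul_nonneg (sub_nonneg.mpr h1) (by linarith : (0:ℝ) ≤ v),
      mul_nonneg h2pos.le (sub_nonneg.mpr h3)]
  have hdiv : 2 * v + 5 ≤ v * v / 2 ^ ε := (le_div_iff₀ h2pos).mpr (by linarith)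
  calc 2 * v + 5 ≤ v * v / 2 ^ ε := hdiv
    _ = (u/2) ^ ε := by rw [step2, step3]
    _ ≤ (u - Real.log 2) ^ ε := step1

private lemma sum_floor_lb {ε : ℝ} (hε : 0 < ε) {n : ℕ} (hn : 2 ≤ n)
    (hlogn : 2 * Real.log 2 ≤ Real.log (n:ℝ))
    (hu : Real.exp 1 ≤ Real.log (Real.log (n:ℝ))) :
    (n:ℝ)/2 * ((Real.log (Real.log (n:ℝ)) - Real.log 2) ^ ε - 1) - n ≤
      ∑ i ∈ Finset.Icc 2 n, (⌊Real.log (Real.log (i : ℝ)) ^ ε⌋ : ℝ) := by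
  set k := n / 2 with hk
  have hkn : k ≤ n := Nat.div_le_self n 2
  have hsub : Finset.Icc (k+1) n ⊆ Finset.Icc 2 n :=
    Finset.Icc_subset_Icc (by omega) le_rfl
  rw [← Finset.sum_sdiff hsub]
  set T := Real.log (Real.log (n:ℝ)) - Real.log 2 with hT
  have hL2 := Real.log_two_lt_d9
  have hL2' := Real.log_two_gt_d9
  have hE1 := Real.exp_one_gt_d9
  have hT1 : (1:ℝ) ≤ T := by rw [hT]; linarith
  have hT0 : (0:ℝ) ≤ T := by linarith
  have hlogn0 : (0:ℝ) < Real.log (n:ℝ) := by linarith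
  have hnR : (2:ℝ) ≤ (n:ℝ) := by exact_mod_cast hn
  -- each term over Icc (k+1) n is at least T^ε - 1
  have hterm : ∀ i ∈ Finset.Icc (k+1) n,
      T ^ ε - 1 ≤ (⌊Real.log (Real.log (i : ℝ)) ^ ε⌋ : ℝ) := by
    intro i hi
    rw [Finset.mem_Icc] at hi
    have hiR : (n:ℝ)/2 ≤ (i:ℝ) := by
      have h1 : n < 2 * (k + 1) := by omega
      have h2 : (n:ℝ) < 2 * ((k:ℝ) + 1) := by exact_mod_cast h1
      have h3 : ((k:ℝ) + 1) ≤ (i:ℝ) := by exact_mod_cast hi.1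
      linarith
    have hn2R : (0:ℝ) < (n:ℝ)/2 := by linarith
    have hlogi : Real.log (n:ℝ) - Real.log 2 ≤ Real.log (i:ℝ) := by
      have := Real.log_le_log hn2R hiR
      rwa [Real.log_div (by linarith) two_ne_zero] at this
    have hTle : T ≤ Real.log (Real.log (i:ℝ)) := by
      have ha : Real.log (n:ℝ)/2 ≤ Real.log (n:ℝ) - Real.log 2 := by linarith
      have hb : (0:ℝ) < Real.log (n:ℝ)/2 := by linarith
      calc T = Real.log (Real.log (n:ℝ)/2) := by
              rw [Real.log_div (ne_of_gt hlogn0) two_ne_zero]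
        _ ≤ Real.log (Real.log (i:ℝ)) := Real.log_le_log hb (le_trans ha hlogi)
    have hrp : T ^ ε ≤ Real.log (Real.log (i:ℝ)) ^ ε :=
      Real.rpow_le_rpow hT0 hTle hε.le
    have hfl : ((⌊T ^ ε⌋ : ℤ) : ℝ) ≤ (⌊Real.log (Real.log (i:ℝ)) ^ ε⌋ : ℝ) := by
      exact_mod_cast Int.floor_mono hrp
    have hfl2 := Int.sub_one_lt_floor (T ^ ε)
    linarith
  have hTe1 : (1:ℝ) ≤ T ^ ε := by
    calc (1:ℝ) = 1 ^ ε := (Real.one_rpow ε).symm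
      _ ≤ T ^ ε := Real.rpow_le_rpow (by norm_num) hT1 hε.le
  have hcard : ((Finset.Icc (k+1) n).card : ℝ) = (n:ℝ) - (k:ℝ) := by
    rw [Nat.card_Icc]
    have : n + 1 - (k + 1) = n - k := by omega
    rw [this]
    push_cast [Nat.cast_sub hkn]
    ring
  have hkR : (k:ℝ) ≤ (n:ℝ)/2 := by
    have := Nat.cast_div_le (m := n) (n := 2) (α := ℝ)
    simpa using this
  have hsum2 : (n:ℝ)/2 * (T ^ ε - 1) ≤ ∑ i ∈ Finset.Icc (k+1) n,
      (⌊Real.log (Real.log (i : ℝ)) ^ ε⌋ : ℝ) := by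
    calc (n:ℝ)/2 * (T ^ ε - 1)
        ≤ ((n:ℝ) - (k:ℝ)) * (T ^ ε - 1) := by
          apply mul_le_mul_of_nonneg_right (by linarith) (by linarith)
      _ = ∑ _i ∈ Finset.Icc (k+1) n, (T ^ ε - 1) := by
          rw [Finset.sum_const, nsmul_eq_mul, hcard]
      _ ≤ _ := Finset.sum_le_sum hterm
  have hsd : -(n:ℝ) ≤ ∑ i ∈ Finset.Icc 2 n \ Finset.Icc (k+1) n,
      (⌊Real.log (Real.log (i : ℝ)) ^ ε⌋ : ℝ) := by
    have hcard2 : ((Finset.Icc 2 n \ Finset.Icc (k+1) n).card : ℝ) ≤ (n:ℝ) := by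
      have h1 : (Finset.Icc 2 n \ Finset.Icc (k+1) n).card ≤ (Finset.Icc 2 n).card :=
        Finset.card_le_card Finset.sdiff_subset
      have h2 : (Finset.Icc 2 n).card ≤ n := by rw [Nat.card_Icc]; omega
      exact_mod_cast le_trans h1 h2
    calc -(n:ℝ) ≤ -((Finset.Icc 2 n \ Finset.Icc (k+1) n).card : ℝ) := by linarith
      _ = ∑ _i ∈ Finset.Icc 2 n \ Finset.Icc (k+1) n, (-1 : ℝ) := by
          rw [Finset.sum_const, nsmul_eq_mul]; ring
      _ ≤ _ := by
          apply Finset.sum_le_sum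
          intro i hi
          have : i ∈ Finset.Icc 2 n := Finset.sdiff_subset hi
          rw [Finset.mem_Icc] at this
          exact floor_term_ge_neg_one hε this.1
  linarith

/-- If `liminf log(c_n(X)/n)/(log log log n) = 0`, then for every
`ε > 0`, `liminf (c_n(X) - Σ_{i=2}^n ⌊(log log i)^ε⌋) = -∞`. -/
theorem liminf_complexity_minus_sum_eq_bot
    {A : Type} [Fintype A] [TopologicalSpace A] [DiscreteTopology A]
    (X : Set (ℤ → A)) (hX : IsSubshift X)
    (hcomp : Filter.liminf
      (fun n : ℕ => ((Real.log ((complexity X n : ℝ) / (n : ℝ)) /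
          Real.log (Real.log (Real.log (n : ℝ))) : ℝ) : EReal)) Filter.atTop = 0) :
    ∀ ε : ℝ, 0 < ε →
      Filter.liminf
        (fun n : ℕ => (((complexity X n : ℝ) -
          ∑ i ∈ Finset.Icc 2 n, (⌊Real.log (Real.log (i : ℝ)) ^ ε⌋ : ℝ) : ℝ) : EReal))
        Filter.atTop = ⊥ := by
  intro ε hε
  rw [EReal.eq_bot_iff_forall_lt]
  intro M
  -- frequently, the complexity is subpolynomial in log log n
  have h0 : Filter.liminf
      (fun n : ℕ => ((Real.log ((complexity X n : ℝ) / (n : ℝ)) /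
          Real.log (Real.log (Real.log (n : ℝ))) : ℝ) : EReal)) Filter.atTop
      < (((ε/2 : ℝ)) : EReal) := by
    rw [hcomp]
    exact EReal.coe_pos.mpr (half_pos hε)
  have hfreq : ∃ᶠ n in atTop,
      Real.log ((complexity X n : ℝ) / (n : ℝ)) /
        Real.log (Real.log (Real.log (n : ℝ))) < ε/2 := by
    have h1 := frequently_lt_of_liminf_lt (h := h0)
    exact h1.mono (fun n hn => EReal.coe_lt_coe_iff.mp hn)
  have tnat : Tendsto (fun n : ℕ => (n:ℝ)) atTop atTop := tendsto_natCast_atTop_atTop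
  have tlog : Tendsto (fun n : ℕ => Real.log (n:ℝ)) atTop atTop :=
    Real.tendsto_log_atTop.comp tnat
  have tll : Tendsto (fun n : ℕ => Real.log (Real.log (n:ℝ))) atTop atTop :=
    Real.tendsto_log_atTop.comp tlog
  have tlll : Tendsto (fun n : ℕ => Real.log (Real.log (Real.log (n:ℝ)))) atTop atTop :=
    Real.tendsto_log_atTop.comp tll
  have hev : ∀ᶠ n : ℕ in atTop,
      (1 ≤ Real.log (Real.log (Real.log (n:ℝ)))) ∧
      (Real.exp 1 ≤ Real.log (Real.log (n:ℝ))) ∧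
      (2 * Real.log 2 ≤ Real.log (n:ℝ)) ∧
      (2 ≤ n) ∧ (1 - M ≤ (n:ℝ)) ∧
      (2 * Real.log (Real.log (n:ℝ)) ^ (ε/2) + 5 ≤
        (Real.log (Real.log (n:ℝ)) - Real.log 2) ^ ε) := by
    filter_upwards [tlll.eventually_ge_atTop 1, tll.eventually_ge_atTop (Real.exp 1),
      tlog.eventually_ge_atTop (2 * Real.log 2), eventually_ge_atTop 2,
      tnat.eventually_ge_atTop (1 - M), tll.eventually (eventually_rpow_ineq hε)]
      with n h1 h2 h3 h4 h5 h6
    exact ⟨h1, h2, h3, h4, h5, h6⟩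
  have key : ∃ᶠ n in atTop,
      (((complexity X n : ℝ) -
          ∑ i ∈ Finset.Icc 2 n, (⌊Real.log (Real.log (i : ℝ)) ^ ε⌋ : ℝ) : ℝ) : EReal)
        ≤ ((M - 1 : ℝ) : EReal) := by
    refine (hfreq.and_eventually hev).mono ?_
    rintro n ⟨hf, h1, h2, h3, h4, h5, h6⟩
    rw [EReal.coe_le_coe_iff]
    set u := Real.log (Real.log (n:ℝ)) with hudef
    have hE1 := Real.exp_one_gt_d9
    have hu0 : (0:ℝ) < u := by linarith
    have hLn0 : (0:ℝ) < Real.log u := by linarith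
    have hnR : (2:ℝ) ≤ (n:ℝ) := by exact_mod_cast h4
    have hnR0 : (0:ℝ) < (n:ℝ) := by linarith
    -- step A : complexity bound
    have hA : (complexity X n : ℝ) < u ^ (ε/2) * (n:ℝ) := by
      have hlt : Real.log ((complexity X n : ℝ) / (n:ℝ)) < ε/2 * Real.log u :=
        (div_lt_iff₀ hLn0).mp hf
      rcases eq_or_lt_of_le (Nat.cast_nonneg (α := ℝ) (complexity X n)) with hzero | hpos
      · rw [← hzero]
        positivity
      · have hdiv : (0:ℝ) < (complexity X n : ℝ) / (n:ℝ) := div_pos hpos hnR0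
        have hlt2 : (complexity X n : ℝ) / (n:ℝ) < u ^ (ε/2) := by
          rw [← Real.exp_log hdiv, Real.rpow_def_of_pos hu0]
          exact Real.exp_lt_exp.mpr (by rw [mul_comm]; exact hlt)
        exact (div_lt_iff₀ hnR0).mp hlt2
    -- step B : sum lower bound
    have hB := sum_floor_lb hε h4 h3 h2
    -- combine
    have hmul := mul_le_mul_of_nonneg_left h6 (by linarith : (0:ℝ) ≤ (n:ℝ)/2)
    nlinarith [hB, hA, hmul]
  calc Filter.liminf
        (fun n : ℕ => (((complexity X n : ℝ) -
          ∑ i ∈ Finset.Icc 2 n, (⌊Real.log (Real.log (i : ℝ)) ^ ε⌋ : ℝ) : ℝ) : EReal))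
        Filter.atTop ≤ ((M - 1 : ℝ) : EReal) := liminf_le_of_frequently_le' key
    _ < (M : EReal) := EReal.coe_lt_coe_iff.mpr (by linarith)
end
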